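/- arXiv:2505.14550 — 5 statements merged into one kernel-verified Lean document; each statement's English description precedes it below -/
import Mathlib

section
/- Step (i) of the proof of the main theorem (well-definedness of the coupled operator along the candidate solution): for every u in D(G), every t > 0 and every x in E, the function s ↦ |(P_s Q((t−s)∨0))(x) − Q(t)(x)| is ν-integrable on (0,∞); in particular 𝔄⁺Q(x,t) := ∫₀^∞ ((P_s Q((t−s)∨0))(x) − Q(t)(x)) ν(ds) is well defined as an absolutely convergent Lebesgue integral for all (x,t) in E × (0,∞). -/
open MeasureTheory Set Filter Topology
open scoped ZeroAtInfty

/-- The candidate solution `Q(t) = E^x[u(M_{D_t})]`, given analytically by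
`Q(0) = u` and `Q(t) = ∫₀^t (∫_{(t-h,∞)} P_{r+h} u ν(dr)) u^φ(h) dh` for `t > 0`. -/
noncomputable def cand {E : Type*} [TopologicalSpace E]
    (P : ℝ → C₀(E, ℝ) →L[ℝ] C₀(E, ℝ)) (ν : Measure ℝ) (uφ : ℝ → ℝ)
    (u : C₀(E, ℝ)) (t : ℝ) : C₀(E, ℝ) :=
  if t = 0 then u
  else ∫ h in Set.Ioo 0 t, uφ h • (∫ r in Set.Ioi (t - h), P (r + h) u ∂ν)

noncomputable def Ttail (ν : Measure ℝ) (a : ℝ) : ℝ := (ν (Set.Ioi a)).toReal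


lemma sigmaFinite_restrict_Ioi (ν : Measure ℝ) (hfin : ∀ a : ℝ, 0 < a → ν (Set.Ioi a) < ⊤) :
    SigmaFinite (ν.restrict (Set.Ioi (0:ℝ))) := by
  refine ⟨⟨⟨fun n => Set.Iic 0 ∪ Set.Ioi (1 / (n + 1) : ℝ), fun _ => trivial, ?_, ?_⟩⟩⟩
  · intro n
    have h1 : ν.restrict (Set.Ioi (0:ℝ)) (Set.Iic 0 ∪ Set.Ioi (1 / (n + 1) : ℝ)) ≤
        ν.restrict (Set.Ioi (0:ℝ)) (Set.Iic 0) + ν.restrict (Set.Ioi (0:ℝ)) (Set.Ioi (1 / (n + 1) : ℝ)) :=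
      measure_union_le _ _
    have h2 : ν.restrict (Set.Ioi (0:ℝ)) (Set.Iic 0) = 0 := by
      rw [Measure.restrict_apply measurableSet_Iic]
      convert measure_empty (μ := ν)
      ext y; simp only [Set.mem_inter_iff, Set.mem_Iic, Set.mem_Ioi, Set.mem_empty_iff_false,
        iff_false, not_and, not_lt]
      intro hy; exact hy
    have h3 : ν.restrict (Set.Ioi (0:ℝ)) (Set.Ioi (1 / (n + 1) : ℝ)) ≤ ν (Set.Ioi (1 / (n + 1) : ℝ)) :=
      Measure.restrict_le_self _
    have hpos : (0:ℝ) < 1 / (n + 1) := by positivity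
    calc ν.restrict (Set.Ioi (0:ℝ)) (Set.Iic 0 ∪ Set.Ioi (1 / (n + 1) : ℝ))
        ≤ _ + _ := h1
      _ ≤ 0 + ν (Set.Ioi (1 / (n + 1) : ℝ)) := by rw [h2]; exact add_le_add le_rfl h3
      _ < ⊤ := by simpa using hfin _ hpos
  · ext y
    simp only [Set.mem_iUnion, Set.mem_union, Set.mem_Iic, Set.mem_Ioi, Set.mem_univ, iff_true]
    rcases le_or_gt y 0 with hy | hy
    · exact ⟨0, Or.inl hy⟩
    · obtain ⟨n, hn⟩ := exists_nat_one_div_lt hy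
      exact ⟨n, Or.inr hn⟩

lemma atail_aesm {E : Type*} [MetricSpace E] [TopologicalSpace.SeparableSpace E]
    [LocallyCompactSpace E]
    (P : ℝ → C₀(E, ℝ) →L[ℝ] C₀(E, ℝ)) (u : C₀(E, ℝ)) (ν : Measure ℝ)
    (hsf : SigmaFinite (ν.restrict (Set.Ioi (0:ℝ))))
    (hcont : Continuous (fun a : ℝ => P (max a 0) u)) (τ : ℝ) (hτ : 0 < τ) :
    AEStronglyMeasurable (fun h => ∫ r in Set.Ioi (τ - h), P (r + h) u ∂ν)
      (volume.restrict (Set.Ioo 0 τ)) := by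
  haveI := hsf
  set ν₀ := ν.restrict (Set.Ioi (0:ℝ)) with hν₀
  set G : ℝ × ℝ → C₀(E, ℝ) := fun p =>
    Set.indicator {q : ℝ × ℝ | τ < q.1 + q.2} (fun q => P (max (q.2 + q.1) 0) u) p with hG
  have hGsm : StronglyMeasurable G := by
    apply StronglyMeasurable.indicator
    · exact (hcont.comp (by continuity : Continuous fun q : ℝ × ℝ => q.2 + q.1)).stronglyMeasurable
    · exact (isOpen_lt continuous_const (continuous_fst.add continuous_snd)).measurableSet
  have hsm : StronglyMeasurable fun h => ∫ r, G (h, r) ∂ν₀ := hGsm.integral_prod_right'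
  refine hsm.aestronglyMeasurable.congr ?_
  refine (ae_restrict_iff' measurableSet_Ioo).2 (Filter.Eventually.of_forall fun h hh => ?_)
  obtain ⟨hh0, hhτ⟩ := hh
  have hτh : 0 < τ - h := by linarith
  have hsub : Set.Ioi (τ - h) ⊆ Set.Ioi (0:ℝ) := fun r hr => lt_trans hτh hr
  have e1 : ∫ r, G (h, r) ∂ν₀ = ∫ r, Set.indicator (Set.Ioi (τ - h))
      (fun r => P (max (r + h) 0) u) r ∂ν₀ := by
    refine integral_congr_ae (Filter.Eventually.of_forall fun r => ?_)
    simp only [hG]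
    have hiff : ((h, r) ∈ {q : ℝ × ℝ | τ < q.1 + q.2}) ↔ r ∈ Set.Ioi (τ - h) := by
      simp only [Set.mem_setOf_eq, Set.mem_Ioi]; constructor <;> intro h' <;> linarith
    by_cases hr : r ∈ Set.Ioi (τ - h)
    · rw [Set.indicator_of_mem (hiff.2 hr), Set.indicator_of_mem hr]
    · rw [Set.indicator_of_notMem (fun hc => hr (hiff.1 hc)), Set.indicator_of_notMem hr]
  have e2 : ∫ r, Set.indicator (Set.Ioi (τ - h)) (fun r => P (max (r + h) 0) u) r ∂ν₀
      = ∫ r in Set.Ioi (τ - h), P (max (r + h) 0) u ∂ν₀ :=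
    integral_indicator measurableSet_Ioi
  have e3 : ν₀.restrict (Set.Ioi (τ - h)) = ν.restrict (Set.Ioi (τ - h)) := by
    rw [hν₀, Measure.restrict_restrict measurableSet_Ioi, Set.inter_eq_left.2 hsub]
  have e4 : ∫ r in Set.Ioi (τ - h), P (max (r + h) 0) u ∂ν
      = ∫ r in Set.Ioi (τ - h), P (r + h) u ∂ν := by
    refine setIntegral_congr_fun measurableSet_Ioi fun r hr => ?_
    have : 0 ≤ r + h := by have := lt_trans hτh hr; linarith
    rw [max_eq_left this]
  dsimp only
  rw [e1, e2, e3, e4]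

set_option maxHeartbeats 1000000 in
/-- Step (i): for every `u ∈ D(G)`, `t > 0` and `x ∈ E`, the integrand of the coupled
space-time nonlocal operator `𝔄⁺` evaluated along the candidate solution is
`ν`-integrable on `(0,∞)`, i.e. `𝔄⁺Q(x,t)` is an absolutely convergent Lebesgue integral. -/
theorem ctrw_overshoot_step_i
    {E : Type*} [MetricSpace E] [TopologicalSpace.SeparableSpace E] [LocallyCompactSpace E]
    (P : ℝ → C₀(E, ℝ) →L[ℝ] C₀(E, ℝ))
    (hP0 : P 0 = ContinuousLinearMap.id ℝ C₀(E, ℝ))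
    (hPsg : ∀ s t : ℝ, 0 ≤ s → 0 ≤ t → P (s + t) = (P s).comp (P t))
    (hPpos : ∀ t : ℝ, 0 ≤ t → ∀ f : C₀(E, ℝ), (∀ x, 0 ≤ f x) → ∀ x, 0 ≤ P t f x)
    (hPcon : ∀ t : ℝ, 0 ≤ t → ∀ f : C₀(E, ℝ), ‖P t f‖ ≤ ‖f‖)
    (hPsc : ∀ f : C₀(E, ℝ), Tendsto (fun t => P t f) (𝓝[≥] (0 : ℝ)) (𝓝 f))
    (ν : Measure ℝ)
    (hν1 : ∫⁻ s in Set.Ioi (0 : ℝ), ENNReal.ofReal (min 1 s) ∂ν ≠ ⊤)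
    (hνinf : ν (Set.Ioi (0 : ℝ)) = ⊤)
    (hνpos : ∀ t : ℝ, 0 < t → 0 < ν (Set.Ioi t))
    (uφ : ℝ → ℝ) (huφm : Measurable uφ)
    (huφ0 : ∀ t : ℝ, 0 < t → 0 ≤ uφ t)
    (huφmono : ∀ s t : ℝ, 0 < s → s ≤ t → uφ t ≤ uφ s)
    (hrenew : ∀ t : ℝ, 0 < t →
      ∫⁻ h in Set.Ioo 0 t, ν (Set.Ioi (t - h)) * ENNReal.ofReal (uφ h) = 1)
    (hlog : ∫⁻ t in Set.Ioo (0 : ℝ) 1, ENNReal.ofReal (|Real.log t| * uφ t) ≠ ⊤)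
    (u Gu : C₀(E, ℝ))
    (hu : Tendsto (fun h : ℝ => h⁻¹ • (P h u - u)) (𝓝[>] (0 : ℝ)) (𝓝 Gu)) :
    ∀ (x : E) (t : ℝ), 0 < t →
      IntegrableOn
        (fun s : ℝ => (P s (cand P ν uφ u (max (t - s) 0))) x - (cand P ν uφ u t) x)
        (Set.Ioi 0) ν := by
  
  intro x t ht
  -- ## Basic constants and semigroup estimates
  set C0 : ℝ := ‖Gu‖ + 1 with hC0def
  have hC0pos : 0 < C0 := by positivity
  have hnsmul : ∀ (r : ℝ) (g : C₀(E, ℝ)), ‖r • g‖ = |r| * ‖g‖ := fun r g =>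
    (norm_smul (α := ℝ) (β := C₀(E, ℝ)) r g).trans (by rw [Real.norm_eq_abs])
  have hun : ∀ s : ℝ, 0 ≤ s → ‖P s u‖ ≤ ‖u‖ := fun s hs => hPcon s hs u
  -- Lipschitz estimate on a single small step
  have hsmall : ∃ δ : ℝ, 0 < δ ∧ ∀ h : ℝ, 0 < h → h < δ → ‖P h u - u‖ ≤ C0 * h := by
    obtain ⟨δ, hδpos, hδ⟩ := Metric.tendsto_nhdsWithin_nhds.mp hu 1 one_pos
    refine ⟨δ, hδpos, fun h hh hhδ => ?_⟩
    have h1 : dist (h⁻¹ • (P h u - u)) Gu < 1 := by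
      refine hδ hh ?_
      rw [Real.dist_eq, sub_zero, abs_of_pos hh]; exact hhδ
    have h2 : ‖h⁻¹ • (P h u - u)‖ ≤ C0 := by
      have := norm_sub_norm_le (h⁻¹ • (P h u - u)) Gu
      rw [← dist_eq_norm] at this
      have := this.trans h1.le
      rw [hC0def]; linarith
    have h3 : P h u - u = h • (h⁻¹ • (P h u - u)) := (smul_inv_smul₀ (ne_of_gt hh) _).symm
    calc ‖P h u - u‖ = ‖h • (h⁻¹ • (P h u - u))‖ := by rw [← h3]
      _ = |h| * ‖h⁻¹ • (P h u - u)‖ := hnsmul _ _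
      _ ≤ h * C0 := by
          rw [abs_of_pos hh]
          exact mul_le_mul_of_nonneg_left h2 hh.le
      _ = C0 * h := mul_comm _ _
  obtain ⟨δ, hδpos, hδ⟩ := hsmall
  have hstepk : ∀ (n : ℕ) (a : ℝ), 0 < a → a < δ → ‖P ((n : ℝ) * a) u - u‖ ≤ C0 * ((n : ℝ) * a) := by
    intro n
    induction n with
    | zero => intro a _ _; simp [hP0]
    | succ n ih =>
        intro a ha haδ
        have hna : (0:ℝ) ≤ (n : ℝ) * a := by positivity
        have hcast : ((n + 1 : ℕ) : ℝ) * a = (n : ℝ) * a + a := by push_cast; ring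
        rw [hcast]
        have hsg := hPsg ((n : ℝ) * a) a hna ha.le
        have hPapp : P ((n : ℝ) * a + a) u = P ((n : ℝ) * a) (P a u) := by
          rw [hsg]; rfl
        calc ‖P ((n : ℝ) * a + a) u - u‖
            = ‖(P ((n : ℝ) * a) (P a u) - P ((n : ℝ) * a) u) + (P ((n : ℝ) * a) u - u)‖ := by
              rw [hPapp, sub_add_sub_cancel]
          _ ≤ ‖P ((n : ℝ) * a) (P a u) - P ((n : ℝ) * a) u‖ + ‖P ((n : ℝ) * a) u - u‖ :=
              norm_add_le _ _
          _ ≤ ‖P a u - u‖ + C0 * ((n : ℝ) * a) := by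
              refine add_le_add ?_ (ih a ha haδ)
              rw [← map_sub]
              exact hPcon _ hna _
          _ ≤ C0 * a + C0 * ((n : ℝ) * a) := add_le_add (hδ a ha haδ) le_rfl
          _ = C0 * ((n : ℝ) * a + a) := by ring
  have hC0lip : ∀ s : ℝ, 0 ≤ s → ‖P s u - u‖ ≤ C0 * s := by
    intro s hs
    rcases eq_or_lt_of_le hs with h0 | hs'
    · simp [← h0, hP0]
    · obtain ⟨n, hn⟩ := exists_nat_gt (s / δ)
      have hnpos : 0 < (n : ℝ) := lt_of_le_of_lt (div_nonneg hs hδpos.le) hn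
      have ha : 0 < s / n := div_pos hs' hnpos
      have haδ : s / n < δ := by
        rw [div_lt_iff₀ hnpos]
        rw [div_lt_iff₀ hδpos] at hn
        linarith [hn]
      have hmul : (n : ℝ) * (s / n) = s := mul_div_cancel₀ s (ne_of_gt hnpos)
      have := hstepk n (s / n) ha haδ
      rwa [hmul] at this
  have hLip : ∀ a b : ℝ, 0 ≤ a → a ≤ b → ‖P b u - P a u‖ ≤ C0 * (b - a) := by
    intro a b ha hab
    have hba : (0:ℝ) ≤ b - a := by linarith
    have hsg := hPsg a (b - a) ha hba
    have h1 : P b u = P a (P (b - a) u) := by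
      have h2 : P (a + (b - a)) u = P a (P (b - a) u) := by rw [hsg]; rfl
      rw [show a + (b - a) = b by ring] at h2
      exact h2
    calc ‖P b u - P a u‖ = ‖P a (P (b - a) u - u)‖ := by rw [h1, map_sub]
      _ ≤ ‖P (b - a) u - u‖ := hPcon a ha _
      _ ≤ C0 * (b - a) := hC0lip _ hba
  -- continuity of the (stopped) orbit map
  have hvlip : LipschitzWith (Real.toNNReal C0) (fun a : ℝ => P (max a 0) u) := by
    refine LipschitzWith.of_dist_le_mul fun a b => ?_
    have key : ∀ c d : ℝ, max c 0 ≤ max d 0 → ‖P (max d 0) u - P (max c 0) u‖ ≤ C0 * |d - c| := by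
      intro c d hcd
      refine (hLip _ _ (le_max_right c 0) hcd).trans ?_
      refine mul_le_mul_of_nonneg_left ?_ hC0pos.le
      calc max d 0 - max c 0 ≤ |max d 0 - max c 0| := le_abs_self _
        _ ≤ |d - c| := abs_max_sub_max_le_abs d c 0
    rw [Real.coe_toNNReal C0 hC0pos.le, dist_eq_norm, Real.dist_eq]
    rcases le_total (max a 0) (max b 0) with h | h
    · rw [norm_sub_rev, abs_sub_comm]; exact key a b h
    · exact key b a h
  have hvcont : Continuous (fun a : ℝ => P (max a 0) u) := hvlip.continuous
  -- ## facts about ν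
  have hfin : ∀ a : ℝ, 0 < a → ν (Set.Ioi a) < ⊤ := by
    intro a ha
    by_contra hcon
    have htop : ν (Set.Ioi a) = ⊤ := by
      rcases eq_top_or_lt_top (ν (Set.Ioi a)) with h | h
      · exact h
      · exact absurd h hcon
    have h1 : ENNReal.ofReal (min 1 a) * ν (Set.Ioi a)
        ≤ ∫⁻ s in Set.Ioi (0:ℝ), ENNReal.ofReal (min 1 s) ∂ν := by
      calc ENNReal.ofReal (min 1 a) * ν (Set.Ioi a)
          = ∫⁻ _ in Set.Ioi a, ENNReal.ofReal (min 1 a) ∂ν := (setLIntegral_const _ _).symm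
        _ ≤ ∫⁻ s in Set.Ioi a, ENNReal.ofReal (min 1 s) ∂ν := by
            refine setLIntegral_mono (by fun_prop) fun s hs => ?_
            exact ENNReal.ofReal_le_ofReal (min_le_min le_rfl (le_of_lt hs))
        _ ≤ ∫⁻ s in Set.Ioi (0:ℝ), ENNReal.ofReal (min 1 s) ∂ν :=
            lintegral_mono_set (Set.Ioi_subset_Ioi ha.le)
    rw [htop, ENNReal.mul_top] at h1
    · exact hν1 (top_le_iff.mp h1)
    · simp only [ne_eq, ENNReal.ofReal_eq_zero, not_le]
      exact lt_min one_pos ha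
  have hTanti : ∀ a b : ℝ, 0 < a → a ≤ b → Ttail ν b ≤ Ttail ν a := by
    intro a b ha hab
    exact ENNReal.toReal_mono (ne_of_lt (hfin a ha)) (measure_mono (Set.Ioi_subset_Ioi hab))
  have hTnn : ∀ a : ℝ, 0 ≤ Ttail ν a := fun a => ENNReal.toReal_nonneg
  have hTmeas : Measurable (Ttail ν) := by
    have hanti : Antitone (fun a : ℝ => ν (Set.Ioi a)) :=
      fun a b hab => measure_mono (Set.Ioi_subset_Ioi hab)
    exact hanti.measurable.ennreal_toReal
  have hsf : SigmaFinite (ν.restrict (Set.Ioi (0:ℝ))) := sigmaFinite_restrict_Ioi ν hfin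
  -- min (1, ·) is ν-integrable on (0,∞)
  have hmin_int : IntegrableOn (fun r : ℝ => min 1 r) (Set.Ioi 0) ν := by
    constructor
    · exact (continuous_const.min continuous_id).aestronglyMeasurable
    · rw [hasFiniteIntegral_iff_ofReal]
      · have : ∫⁻ r in Set.Ioi (0:ℝ), ENNReal.ofReal (min 1 r) ∂ν < ⊤ :=
          lt_top_iff_ne_top.2 hν1
        exact this
      · refine (ae_restrict_iff' measurableSet_Ioi).2 (Filter.Eventually.of_forall fun r hr => ?_)
        exact le_min zero_le_one (le_of_lt hr)
  set K : ℝ := ∫ r in Set.Ioi (0:ℝ), min 1 r ∂ν with hKdef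
  have hKnn : 0 ≤ K := by
    rw [hKdef]
    refine setIntegral_nonneg measurableSet_Ioi fun r hr => ?_
    exact le_min zero_le_one (le_of_lt hr)
  have hKb : ∀ a : ℝ, 0 < a → ∫ r in Set.Ioi a, min 1 r ∂ν ≤ K := by
    intro a ha
    rw [hKdef]
    refine setIntegral_mono_set hmin_int ?_ (HasSubset.Subset.eventuallyLE (Set.Ioi_subset_Ioi ha.le))
    refine (ae_restrict_iff' measurableSet_Ioi).2 (Filter.Eventually.of_forall fun r hr => ?_)
    exact le_min zero_le_one (le_of_lt hr)
  set D : ℝ := max (2 * ‖u‖) C0 with hDdef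
  have hDnn : 0 ≤ D := le_trans (by positivity) (le_max_left _ _)
  -- ## renewal equation in real form
  have hren : ∀ τ : ℝ, 0 < τ →
      Integrable (fun h => uφ h * Ttail ν (τ - h)) (volume.restrict (Set.Ioo 0 τ)) ∧
      ∫ h in Set.Ioo 0 τ, uφ h * Ttail ν (τ - h) = 1 := by
    intro τ hτ
    have hmeas : Measurable fun h : ℝ => uφ h * Ttail ν (τ - h) :=
      huφm.mul (hTmeas.comp (measurable_const.sub measurable_id))
    have hnn : 0 ≤ᵐ[volume.restrict (Set.Ioo 0 τ)] fun h => uφ h * Ttail ν (τ - h) :=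
      (ae_restrict_iff' measurableSet_Ioo).2 (Filter.Eventually.of_forall fun h hh =>
        mul_nonneg (huφ0 h hh.1) (hTnn _))
    have hlint : ∫⁻ h in Set.Ioo 0 τ, ENNReal.ofReal (uφ h * Ttail ν (τ - h)) = 1 := by
      rw [← hrenew τ hτ]
      refine setLIntegral_congr_fun measurableSet_Ioo (fun h hh => ?_)
      have hτh : (0:ℝ) < τ - h := by
        have := hh.2; linarith
      rw [ENNReal.ofReal_mul (huφ0 h hh.1),
        show ENNReal.ofReal (Ttail ν (τ - h)) = ν (Set.Ioi (τ - h)) from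
          ENNReal.ofReal_toReal (ne_of_lt (hfin _ hτh)),
        mul_comm]
    have hint : Integrable (fun h => uφ h * Ttail ν (τ - h)) (volume.restrict (Set.Ioo 0 τ)) := by
      refine ⟨hmeas.aestronglyMeasurable, ?_⟩
      rw [hasFiniteIntegral_iff_ofReal hnn, hlint]
      exact ENNReal.one_lt_top
    refine ⟨hint, ?_⟩
    rw [integral_eq_lintegral_of_nonneg_ae hnn hmeas.aestronglyMeasurable, hlint]
    simp
  -- ## integrability of the tail integrands
  have haesmP : ∀ a b : ℝ, 0 ≤ a + b →
      AEStronglyMeasurable (fun r : ℝ => P (r + b) u) (ν.restrict (Set.Ioi a)) := by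
    intro a b hab
    have hc : Continuous fun r : ℝ => P (max (r + b) 0) u := by
      have hadd : Continuous fun r : ℝ => r + b := continuous_id.add continuous_const
      exact hvcont.comp hadd
    refine hc.aestronglyMeasurable.congr ?_
    refine (ae_restrict_iff' measurableSet_Ioi).2 (Filter.Eventually.of_forall fun r hr => ?_)
    have h0 : 0 ≤ r + b := by
      have : a < r := hr
      linarith
    simp only [Function.comp, max_eq_left h0]
  have hPt_int : ∀ b a : ℝ, 0 < a → 0 ≤ a + b →
      IntegrableOn (fun r : ℝ => P (r + b) u) (Set.Ioi a) ν := by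
    intro b a ha hab
    refine Integrable.mono' (g := fun _ => ‖u‖) (integrableOn_const ((hfin a ha)).ne)
      (haesmP a b hab) ?_
    refine (ae_restrict_iff' measurableSet_Ioi).2 (Filter.Eventually.of_forall fun r hr => ?_)
    refine hun (r + b) ?_
    have : a < r := hr
    linarith
  have hPtw_int : ∀ (b a : ℝ) (w : C₀(E, ℝ)), 0 < a → 0 ≤ a + b →
      IntegrableOn (fun r : ℝ => P (r + b) u - w) (Set.Ioi a) ν := by
    intro b a w ha hab
    exact (hPt_int b a ha hab).sub (integrableOn_const ((hfin a ha)).ne)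
  have hsplitw : ∀ (a b : ℝ) (w : C₀(E, ℝ)), 0 < a → 0 ≤ a + b →
      ∫ r in Set.Ioi a, P (r + b) u ∂ν
        = (∫ r in Set.Ioi a, (P (r + b) u - w) ∂ν) + Ttail ν a • w := by
    intro a b w ha hab
    rw [integral_sub (hPt_int b a ha hab) (integrableOn_const ((hfin a ha)).ne),
      setIntegral_const]
    rw [Ttail, measureReal_def]
    abel
  have hCtnorm : ∀ (a b : ℝ) (w : C₀(E, ℝ)), 0 < a → 0 ≤ a + b → ‖w‖ ≤ ‖u‖ →
      ‖∫ r in Set.Ioi a, (P (r + b) u - w) ∂ν‖ ≤ (2 * ‖u‖) * Ttail ν a := by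
    intro a b w ha hab hw
    have h1 : ‖∫ r in Set.Ioi a, (P (r + b) u - w) ∂ν‖ ≤ ∫ _ in Set.Ioi a, 2 * ‖u‖ ∂ν := by
      refine norm_integral_le_of_norm_le (integrableOn_const ((hfin a ha)).ne) ?_
      refine (ae_restrict_iff' measurableSet_Ioi).2 (Filter.Eventually.of_forall fun r hr => ?_)
      have hr0 : 0 ≤ r + b := by
        have : a < r := hr
        linarith
      calc ‖P (r + b) u - w‖ ≤ ‖P (r + b) u‖ + ‖w‖ := norm_sub_le _ _
        _ ≤ ‖u‖ + ‖u‖ := add_le_add (hun _ hr0) hw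
        _ = 2 * ‖u‖ := by ring
    rw [setIntegral_const] at h1
    refine h1.trans ?_
    rw [smul_eq_mul, Ttail, mul_comm, measureReal_def]
  -- measurability in h of the inner tail integral
  have hAaesm : ∀ τ : ℝ, 0 < τ →
      AEStronglyMeasurable (fun h => ∫ r in Set.Ioi (τ - h), P (r + h) u ∂ν)
        (volume.restrict (Set.Ioo 0 τ)) :=
    fun τ hτ => atail_aesm P u ν hsf hvcont τ hτ
  -- representation of cand
  have hcand_repr : ∀ τ : ℝ, 0 < τ → cand P ν uφ u τ
      = ∫ h in Set.Ioo 0 τ, uφ h • (∫ r in Set.Ioi (τ - h), P (r + h) u ∂ν) := by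
    intro τ hτ
    rw [cand, if_neg (ne_of_gt hτ)]
  have hcand0 : cand P ν uφ u 0 = u := by rw [cand, if_pos rfl]
  have hAnorm : ∀ τ : ℝ, 0 < τ → ∀ h ∈ Set.Ioo (0:ℝ) τ,
      ‖∫ r in Set.Ioi (τ - h), P (r + h) u ∂ν‖ ≤ ‖u‖ * Ttail ν (τ - h) := by
    intro τ hτ h hh
    have hτh : 0 < τ - h := by have := hh.2; linarith
    have h1 : ‖∫ r in Set.Ioi (τ - h), P (r + h) u ∂ν‖ ≤ ∫ _ in Set.Ioi (τ - h), ‖u‖ ∂ν := by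
      refine norm_integral_le_of_norm_le (integrableOn_const ((hfin _ hτh)).ne) ?_
      refine (ae_restrict_iff' measurableSet_Ioi).2 (Filter.Eventually.of_forall fun r hr => ?_)
      refine hun (r + h) ?_
      have : τ - h < r := hr
      have := hh.1
      linarith
    rw [setIntegral_const] at h1
    refine h1.trans ?_
    rw [smul_eq_mul, Ttail, mul_comm, measureReal_def]
  have hcand_int : ∀ τ : ℝ, 0 < τ →
      Integrable (fun h => uφ h • (∫ r in Set.Ioi (τ - h), P (r + h) u ∂ν))
        (volume.restrict (Set.Ioo 0 τ)) := by
    intro τ hτ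
    refine Integrable.mono' (g := fun h => ‖u‖ * (uφ h * Ttail ν (τ - h)))
      ((hren τ hτ).1.const_mul ‖u‖) ((huφm.aestronglyMeasurable).smul (hAaesm τ hτ)) ?_
    refine (ae_restrict_iff' measurableSet_Ioo).2 (Filter.Eventually.of_forall fun h hh => ?_)
    calc ‖uφ h • (∫ r in Set.Ioi (τ - h), P (r + h) u ∂ν)‖
        = |uφ h| * ‖∫ r in Set.Ioi (τ - h), P (r + h) u ∂ν‖ := hnsmul _ _
      _ = uφ h * ‖∫ r in Set.Ioi (τ - h), P (r + h) u ∂ν‖ := by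
          rw [abs_of_nonneg (huφ0 h hh.1)]
      _ ≤ uφ h * (‖u‖ * Ttail ν (τ - h)) :=
          mul_le_mul_of_nonneg_left (hAnorm τ hτ h hh) (huφ0 h hh.1)
      _ = ‖u‖ * (uφ h * Ttail ν (τ - h)) := by ring
  have hcand_norm : ∀ τ : ℝ, 0 ≤ τ → ‖cand P ν uφ u τ‖ ≤ ‖u‖ := by
    intro τ hτ
    rcases eq_or_lt_of_le hτ with h0 | hτ'
    · rw [← h0, hcand0]
    · rw [hcand_repr τ hτ']
      have h1 : ‖∫ h in Set.Ioo 0 τ, uφ h • (∫ r in Set.Ioi (τ - h), P (r + h) u ∂ν)‖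
          ≤ ∫ h in Set.Ioo 0 τ, ‖u‖ * (uφ h * Ttail ν (τ - h)) := by
        refine norm_integral_le_of_norm_le ((hren τ hτ').1.const_mul ‖u‖) ?_
        refine (ae_restrict_iff' measurableSet_Ioo).2 (Filter.Eventually.of_forall fun h hh => ?_)
        calc ‖uφ h • (∫ r in Set.Ioi (τ - h), P (r + h) u ∂ν)‖
            = |uφ h| * ‖∫ r in Set.Ioi (τ - h), P (r + h) u ∂ν‖ := hnsmul _ _
          _ = uφ h * ‖∫ r in Set.Ioi (τ - h), P (r + h) u ∂ν‖ := by
              rw [abs_of_nonneg (huφ0 h hh.1)]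
          _ ≤ uφ h * (‖u‖ * Ttail ν (τ - h)) :=
              mul_le_mul_of_nonneg_left (hAnorm τ hτ' h hh) (huφ0 h hh.1)
          _ = ‖u‖ * (uφ h * Ttail ν (τ - h)) := by ring
      refine h1.trans ?_
      rw [integral_const_mul, (hren τ hτ').2, mul_one]
  -- ## the key Lipschitz-type estimate
  have MAIN : ∀ τ σ : ℝ, 0 < τ → 0 < σ → σ ≤ τ / 2 →
      ‖P σ (cand P ν uφ u (τ - σ)) - cand P ν uφ u τ‖
        ≤ (2 * C0 + D * K * uφ (τ / 2)) * σ := by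
    intro τ σ hτ hσ hστ
    have hτ2 : 0 < τ / 2 := by linarith
    have hτ'pos : 0 < τ - σ := by linarith
    have hττ' : τ / 2 ≤ τ - σ := by linarith
    set w : C₀(E, ℝ) := P τ u with hwdef
    have hwn : ‖w‖ ≤ ‖u‖ := hun τ hτ.le
    -- the two centered integrands
    set Ct : ℝ → C₀(E, ℝ) := fun h => ∫ r in Set.Ioi (τ - h), (P (r + h) u - w) ∂ν with hCtdef
    set Dσ : ℝ → C₀(E, ℝ) :=
      fun h => ∫ r in Set.Ioi ((τ - σ) - h), (P (r + (h + σ)) u - w) ∂ν with hDσdef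
    -- membership facts
    have hmemτ : ∀ h ∈ Set.Ioo (0:ℝ) τ, 0 < τ - h ∧ 0 ≤ (τ - h) + h := by
      intro h hh
      constructor
      · have := hh.2; linarith
      · linarith [hh.1, hh.2]
    have hmemτ' : ∀ h ∈ Set.Ioo (0:ℝ) (τ - σ), 0 < (τ - σ) - h ∧ 0 ≤ ((τ - σ) - h) + h := by
      intro h hh
      constructor
      · have := hh.2; linarith
      · have := hh.1; linarith [hτ'pos]
    -- splitting identities for the inner integrals
    have hCt_eq : ∀ h ∈ Set.Ioo (0:ℝ) τ,
        Ct h = (∫ r in Set.Ioi (τ - h), P (r + h) u ∂ν) - Ttail ν (τ - h) • w := by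
      intro h hh
      have h1 := hsplitw (τ - h) h w (hmemτ h hh).1 (hmemτ h hh).2
      have h2 : Ct h = ∫ r in Set.Ioi (τ - h), (P (r + h) u - w) ∂ν := rfl
      rw [h2, h1]
      module
    have hDσB : ∀ h ∈ Set.Ioo (0:ℝ) (τ - σ),
        P σ (∫ r in Set.Ioi ((τ - σ) - h), P (r + h) u ∂ν)
          = Dσ h + Ttail ν ((τ - σ) - h) • w := by
      intro h hh
      obtain ⟨hpos, hnn⟩ := hmemτ' h hh
      have e2 : ∀ r ∈ Set.Ioi ((τ - σ) - h), P σ (P (r + h) u) = P (r + (h + σ)) u := by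
        intro r hr
        have hrh : (0:ℝ) ≤ r + h := by
          have : (τ - σ) - h < r := hr
          linarith
        have := hPsg σ (r + h) hσ.le hrh
        calc P σ (P (r + h) u) = ((P σ).comp (P (r + h))) u := rfl
          _ = P (σ + (r + h)) u := by rw [← this]
          _ = P (r + (h + σ)) u := by rw [show σ + (r + h) = r + (h + σ) by ring]
      calc P σ (∫ r in Set.Ioi ((τ - σ) - h), P (r + h) u ∂ν)
          = ∫ r in Set.Ioi ((τ - σ) - h), P σ (P (r + h) u) ∂ν :=
            (ContinuousLinearMap.integral_comp_comm _ (hPt_int h ((τ - σ) - h) hpos hnn)).symm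
        _ = ∫ r in Set.Ioi ((τ - σ) - h), P (r + (h + σ)) u ∂ν :=
            setIntegral_congr_fun measurableSet_Ioi e2
        _ = (∫ r in Set.Ioi ((τ - σ) - h), (P (r + (h + σ)) u - w) ∂ν)
              + Ttail ν ((τ - σ) - h) • w :=
            hsplitw ((τ - σ) - h) (h + σ) w hpos (by linarith)
        _ = Dσ h + Ttail ν ((τ - σ) - h) • w := rfl
    -- integrability of the centered integrands
    have hCt_aesm : AEStronglyMeasurable Ct (volume.restrict (Set.Ioo 0 τ)) := by
      have h1 : AEStronglyMeasurable
          (fun h => (∫ r in Set.Ioi (τ - h), P (r + h) u ∂ν) - Ttail ν (τ - h) • w)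
          (volume.restrict (Set.Ioo 0 τ)) := by
        refine (hAaesm τ hτ).sub ?_
        exact ((hTmeas.comp (measurable_const.sub measurable_id)).aestronglyMeasurable).smul_const w
      refine h1.congr ?_
      refine (ae_restrict_iff' measurableSet_Ioo).2 (Filter.Eventually.of_forall fun h hh => ?_)
      exact (hCt_eq h hh).symm
    have hDσ_aesm : AEStronglyMeasurable Dσ (volume.restrict (Set.Ioo 0 (τ - σ))) := by
      have h1 : AEStronglyMeasurable
          (fun h => P σ (∫ r in Set.Ioi ((τ - σ) - h), P (r + h) u ∂ν)
            - Ttail ν ((τ - σ) - h) • w)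
          (volume.restrict (Set.Ioo 0 (τ - σ))) := by
        refine AEStronglyMeasurable.sub ?_ ?_
        · exact (P σ).continuous.comp_aestronglyMeasurable (hAaesm (τ - σ) hτ'pos)
        · exact ((hTmeas.comp (measurable_const.sub measurable_id)).aestronglyMeasurable).smul_const w
      refine h1.congr ?_
      refine (ae_restrict_iff' measurableSet_Ioo).2 (Filter.Eventually.of_forall fun h hh => ?_)
      show P σ (∫ r in Set.Ioi ((τ - σ) - h), P (r + h) u ∂ν)
          - Ttail ν ((τ - σ) - h) • w = Dσ h
      rw [hDσB h hh]
      module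
    have hCt_bound : ∀ h ∈ Set.Ioo (0:ℝ) τ, ‖Ct h‖ ≤ (2 * ‖u‖) * Ttail ν (τ - h) := by
      intro h hh
      exact hCtnorm (τ - h) h w (hmemτ h hh).1 (hmemτ h hh).2 hwn
    have hDσ_bound : ∀ h ∈ Set.Ioo (0:ℝ) (τ - σ),
        ‖Dσ h‖ ≤ (2 * ‖u‖) * Ttail ν ((τ - σ) - h) := by
      intro h hh
      exact hCtnorm ((τ - σ) - h) (h + σ) w (hmemτ' h hh).1 (by linarith [(hmemτ' h hh).2]) hwn
    have hCt_int : Integrable (fun h => uφ h • Ct h) (volume.restrict (Set.Ioo 0 τ)) := by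
      refine Integrable.mono' (g := fun h => (2 * ‖u‖) * (uφ h * Ttail ν (τ - h)))
        ((hren τ hτ).1.const_mul _) ((huφm.aestronglyMeasurable).smul hCt_aesm) ?_
      refine (ae_restrict_iff' measurableSet_Ioo).2 (Filter.Eventually.of_forall fun h hh => ?_)
      calc ‖uφ h • Ct h‖ = |uφ h| * ‖Ct h‖ := hnsmul _ _
        _ = uφ h * ‖Ct h‖ := by rw [abs_of_nonneg (huφ0 h hh.1)]
        _ ≤ uφ h * ((2 * ‖u‖) * Ttail ν (τ - h)) :=
            mul_le_mul_of_nonneg_left (hCt_bound h hh) (huφ0 h hh.1)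
        _ = (2 * ‖u‖) * (uφ h * Ttail ν (τ - h)) := by ring
    have hDσ_int : Integrable (fun h => uφ h • Dσ h) (volume.restrict (Set.Ioo 0 (τ - σ))) := by
      refine Integrable.mono' (g := fun h => (2 * ‖u‖) * (uφ h * Ttail ν ((τ - σ) - h)))
        ((hren (τ - σ) hτ'pos).1.const_mul _) ((huφm.aestronglyMeasurable).smul hDσ_aesm) ?_
      refine (ae_restrict_iff' measurableSet_Ioo).2 (Filter.Eventually.of_forall fun h hh => ?_)
      calc ‖uφ h • Dσ h‖ = |uφ h| * ‖Dσ h‖ := hnsmul _ _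
        _ = uφ h * ‖Dσ h‖ := by rw [abs_of_nonneg (huφ0 h hh.1)]
        _ ≤ uφ h * ((2 * ‖u‖) * Ttail ν ((τ - σ) - h)) :=
            mul_le_mul_of_nonneg_left (hDσ_bound h hh) (huφ0 h hh.1)
        _ = (2 * ‖u‖) * (uφ h * Ttail ν ((τ - σ) - h)) := by ring
    have hTw_intτ : Integrable (fun h => (uφ h * Ttail ν (τ - h)) • w)
        (volume.restrict (Set.Ioo 0 τ)) := (hren τ hτ).1.smul_const w
    have hTw_intτ' : Integrable (fun h => (uφ h * Ttail ν ((τ - σ) - h)) • w)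
        (volume.restrict (Set.Ioo 0 (τ - σ))) := (hren (τ - σ) hτ'pos).1.smul_const w
    -- representation of cand τ
    have h1 : cand P ν uφ u τ = (∫ h in Set.Ioo 0 τ, uφ h • Ct h) + w := by
      rw [hcand_repr τ hτ]
      have e : ∀ h ∈ Set.Ioo (0:ℝ) τ,
          uφ h • (∫ r in Set.Ioi (τ - h), P (r + h) u ∂ν)
            = uφ h • Ct h + (uφ h * Ttail ν (τ - h)) • w := by
        intro h hh
        rw [hCt_eq h hh]
        module
      calc ∫ h in Set.Ioo 0 τ, uφ h • (∫ r in Set.Ioi (τ - h), P (r + h) u ∂ν)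
          = ∫ h in Set.Ioo 0 τ, (uφ h • Ct h + (uφ h * Ttail ν (τ - h)) • w) :=
            setIntegral_congr_fun measurableSet_Ioo e
        _ = (∫ h in Set.Ioo 0 τ, uφ h • Ct h)
              + ∫ h in Set.Ioo 0 τ, (uφ h * Ttail ν (τ - h)) • w :=
            integral_add hCt_int hTw_intτ
        _ = (∫ h in Set.Ioo 0 τ, uφ h • Ct h) + w := by
            have hisc := _root_.integral_smul_const
              (μ := volume.restrict (Set.Ioo (0:ℝ) τ)) (fun h => uφ h * Ttail ν (τ - h)) w
            rw [hisc, (hren τ hτ).2]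
            module
    -- representation of P σ (cand (τ - σ))
    have h2 : P σ (cand P ν uφ u (τ - σ)) = (∫ h in Set.Ioo 0 (τ - σ), uφ h • Dσ h) + w := by
      rw [hcand_repr (τ - σ) hτ'pos,
        ← ContinuousLinearMap.integral_comp_comm _ (hcand_int (τ - σ) hτ'pos)]
      have e : ∀ h ∈ Set.Ioo (0:ℝ) (τ - σ),
          P σ (uφ h • (∫ r in Set.Ioi ((τ - σ) - h), P (r + h) u ∂ν))
            = uφ h • Dσ h + (uφ h * Ttail ν ((τ - σ) - h)) • w := by
        intro h hh
        have hms : P σ (uφ h • (∫ r in Set.Ioi ((τ - σ) - h), P (r + h) u ∂ν))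
            = uφ h • P σ (∫ r in Set.Ioi ((τ - σ) - h), P (r + h) u ∂ν) :=
          map_smul (P σ) (uφ h) _
        rw [hms, hDσB h hh]
        module
      calc ∫ h in Set.Ioo 0 (τ - σ), P σ (uφ h • (∫ r in Set.Ioi ((τ - σ) - h), P (r + h) u ∂ν))
          = ∫ h in Set.Ioo 0 (τ - σ), (uφ h • Dσ h + (uφ h * Ttail ν ((τ - σ) - h)) • w) :=
            setIntegral_congr_fun measurableSet_Ioo e
        _ = (∫ h in Set.Ioo 0 (τ - σ), uφ h • Dσ h)
              + ∫ h in Set.Ioo 0 (τ - σ), (uφ h * Ttail ν ((τ - σ) - h)) • w :=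
            integral_add hDσ_int hTw_intτ'
        _ = (∫ h in Set.Ioo 0 (τ - σ), uφ h • Dσ h) + w := by
            have hisc := _root_.integral_smul_const
              (μ := volume.restrict (Set.Ioo (0:ℝ) (τ - σ)))
              (fun h => uφ h * Ttail ν ((τ - σ) - h)) w
            rw [hisc, (hren (τ - σ) hτ'pos).2]
            module
    -- the difference
    have hsplitset : Set.Ioo (0:ℝ) τ = Set.Ioo 0 (τ - σ) ∪ Set.Ico (τ - σ) τ :=
      (Set.Ioo_union_Ico_eq_Ioo hτ'pos (by linarith)).symm
    have hdisj : Disjoint (Set.Ioo (0:ℝ) (τ - σ)) (Set.Ico (τ - σ) τ) := by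
      refine Set.disjoint_left.2 fun h h1 h2 => ?_
      exact absurd h2.1 (not_le.2 h1.2)
    have hCt_int1 : Integrable (fun h => uφ h • Ct h) (volume.restrict (Set.Ioo 0 (τ - σ))) :=
      MeasureTheory.IntegrableOn.mono_set hCt_int (by rw [hsplitset]; exact Set.subset_union_left)
    have hCt_int2 : Integrable (fun h => uφ h • Ct h) (volume.restrict (Set.Ico (τ - σ) τ)) :=
      MeasureTheory.IntegrableOn.mono_set hCt_int (by rw [hsplitset]; exact Set.subset_union_right)
    have hdiff : P σ (cand P ν uφ u (τ - σ)) - cand P ν uφ u τ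
        = (∫ h in Set.Ioo 0 (τ - σ), uφ h • (Dσ h - Ct h))
          - ∫ h in Set.Ico (τ - σ) τ, uφ h • Ct h := by
      rw [h1, h2]
      have hsplit : ∫ h in Set.Ioo 0 τ, uφ h • Ct h
          = (∫ h in Set.Ioo 0 (τ - σ), uφ h • Ct h) + ∫ h in Set.Ico (τ - σ) τ, uφ h • Ct h := by
        rw [hsplitset] at hCt_int ⊢
        exact setIntegral_union hdisj measurableSet_Ico hCt_int1 hCt_int2
      rw [hsplit]
      have hsub : ∫ h in Set.Ioo 0 (τ - σ), uφ h • (Dσ h - Ct h)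
          = (∫ h in Set.Ioo 0 (τ - σ), uφ h • Dσ h) - ∫ h in Set.Ioo 0 (τ - σ), uφ h • Ct h := by
        rw [← integral_sub hDσ_int hCt_int1]
        refine integral_congr_ae (Filter.Eventually.of_forall fun h => ?_)
        exact smul_sub (uφ h) (Dσ h) (Ct h)
      rw [hsub]
      abel
    -- pointwise estimate on (0, τ-σ)
    have hkey : ∀ h ∈ Set.Ioo (0:ℝ) (τ - σ),
        ‖Dσ h - Ct h‖ ≤ (2 * C0 * σ) * Ttail ν ((τ - σ) - h) := by
      intro h hh
      obtain ⟨hpos', hnn'⟩ := hmemτ' h hh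
      have hposτ : 0 < τ - h := by have := hh.2; linarith
      have hle : (τ - σ) - h ≤ τ - h := by linarith
      have hIoisplit : Set.Ioi ((τ - σ) - h) = Set.Ioc ((τ - σ) - h) (τ - h) ∪ Set.Ioi (τ - h) :=
        (Set.Ioc_union_Ioi_eq_Ioi hle).symm
      have hdisj2 : Disjoint (Set.Ioc ((τ - σ) - h) (τ - h)) (Set.Ioi (τ - h)) := by
        refine Set.disjoint_left.2 fun r h1 h2 => ?_
        exact absurd h2 (not_lt.2 h1.2)
      have hint_a : IntegrableOn (fun r : ℝ => P (r + (h + σ)) u - w)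
          (Set.Ioc ((τ - σ) - h) (τ - h)) ν :=
        (hPtw_int (h + σ) ((τ - σ) - h) w hpos' (by linarith)).mono_set Set.Ioc_subset_Ioi_self
      have hint_b : IntegrableOn (fun r : ℝ => P (r + (h + σ)) u - w) (Set.Ioi (τ - h)) ν :=
        (hPtw_int (h + σ) ((τ - σ) - h) w hpos' (by linarith)).mono_set
          (Set.Ioi_subset_Ioi hle)
      have hint_c : IntegrableOn (fun r : ℝ => P (r + h) u - w) (Set.Ioi (τ - h)) ν :=
        hPtw_int h (τ - h) w hposτ (by linarith [hh.1])
      have hsplitD : Dσ h = (∫ r in Set.Ioc ((τ - σ) - h) (τ - h), (P (r + (h + σ)) u - w) ∂ν)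
          + ∫ r in Set.Ioi (τ - h), (P (r + (h + σ)) u - w) ∂ν := by
        have hD : Dσ h = ∫ r in Set.Ioi ((τ - σ) - h), (P (r + (h + σ)) u - w) ∂ν := rfl
        rw [hD, hIoisplit]
        exact setIntegral_union hdisj2 measurableSet_Ioi hint_a hint_b
      have hdiff2 : Dσ h - Ct h
          = (∫ r in Set.Ioc ((τ - σ) - h) (τ - h), (P (r + (h + σ)) u - w) ∂ν)
            + ∫ r in Set.Ioi (τ - h), (P (r + (h + σ)) u - P (r + h) u) ∂ν := by
        have hC : Ct h = ∫ r in Set.Ioi (τ - h), (P (r + h) u - w) ∂ν := rfl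
        rw [hsplitD, hC]
        have : ∫ r in Set.Ioi (τ - h), (P (r + (h + σ)) u - P (r + h) u) ∂ν
            = (∫ r in Set.Ioi (τ - h), (P (r + (h + σ)) u - w) ∂ν)
              - ∫ r in Set.Ioi (τ - h), (P (r + h) u - w) ∂ν := by
          rw [← integral_sub hint_b hint_c]
          refine setIntegral_congr_fun measurableSet_Ioi fun r hr => ?_
          rw [sub_sub_sub_cancel_right]
        rw [this]
        abel
      -- first piece
      have hfinIoc : ν (Set.Ioc ((τ - σ) - h) (τ - h)) < ⊤ :=
        lt_of_le_of_lt (measure_mono Set.Ioc_subset_Ioi_self) (hfin _ hpos')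
      have hn1 : ‖∫ r in Set.Ioc ((τ - σ) - h) (τ - h), (P (r + (h + σ)) u - w) ∂ν‖
          ≤ (C0 * σ) * Ttail ν ((τ - σ) - h) := by
        have hb : ‖∫ r in Set.Ioc ((τ - σ) - h) (τ - h), (P (r + (h + σ)) u - w) ∂ν‖
            ≤ ∫ _ in Set.Ioc ((τ - σ) - h) (τ - h), C0 * σ ∂ν := by
          refine norm_integral_le_of_norm_le (integrableOn_const (hfinIoc).ne) ?_
          refine (ae_restrict_iff' measurableSet_Ioc).2
            (Filter.Eventually.of_forall fun r hr => ?_)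
          have hτle : τ ≤ r + (h + σ) := by
            have := hr.1; linarith
          have := hLip τ (r + (h + σ)) hτ.le hτle
          rw [hwdef]
          refine this.trans ?_
          have : r + (h + σ) - τ ≤ σ := by
            have := hr.2; linarith
          exact mul_le_mul_of_nonneg_left this hC0pos.le
        rw [setIntegral_const, smul_eq_mul] at hb
        refine hb.trans ?_
        rw [mul_comm (ν.real (Set.Ioc ((τ - σ) - h) (τ - h))) (C0 * σ)]
        refine mul_le_mul_of_nonneg_left ?_ (by positivity)
        exact ENNReal.toReal_mono (ne_of_lt (hfin _ hpos'))
          (measure_mono Set.Ioc_subset_Ioi_self)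
      -- second piece
      have hn2 : ‖∫ r in Set.Ioi (τ - h), (P (r + (h + σ)) u - P (r + h) u) ∂ν‖
          ≤ (C0 * σ) * Ttail ν ((τ - σ) - h) := by
        have hb : ‖∫ r in Set.Ioi (τ - h), (P (r + (h + σ)) u - P (r + h) u) ∂ν‖
            ≤ ∫ _ in Set.Ioi (τ - h), C0 * σ ∂ν := by
          refine norm_integral_le_of_norm_le (integrableOn_const ((hfin _ hposτ)).ne) ?_
          refine (ae_restrict_iff' measurableSet_Ioi).2
            (Filter.Eventually.of_forall fun r hr => ?_)
          have hr0 : 0 ≤ r + h := by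
            have : τ - h < r := hr
            linarith
          have := hLip (r + h) (r + (h + σ)) hr0 (by linarith)
          refine this.trans ?_
          rw [show r + (h + σ) - (r + h) = σ by ring]
        rw [setIntegral_const, smul_eq_mul] at hb
        refine hb.trans ?_
        rw [mul_comm (ν.real (Set.Ioi (τ - h))) (C0 * σ)]
        refine mul_le_mul_of_nonneg_left ?_ (by positivity)
        exact hTanti _ _ hpos' hle
      calc ‖Dσ h - Ct h‖
          ≤ ‖∫ r in Set.Ioc ((τ - σ) - h) (τ - h), (P (r + (h + σ)) u - w) ∂ν‖
            + ‖∫ r in Set.Ioi (τ - h), (P (r + (h + σ)) u - P (r + h) u) ∂ν‖ := by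
            rw [hdiff2]; exact norm_add_le _ _
        _ ≤ (C0 * σ) * Ttail ν ((τ - σ) - h) + (C0 * σ) * Ttail ν ((τ - σ) - h) :=
            add_le_add hn1 hn2
        _ = (2 * C0 * σ) * Ttail ν ((τ - σ) - h) := by ring
    -- pointwise estimate on [τ-σ, τ)
    have hkey2 : ∀ h ∈ Set.Ico (τ - σ) τ, ‖Ct h‖ ≤ D * K := by
      intro h hh
      have hh0 : 0 < h := lt_of_lt_of_le hτ'pos hh.1
      have hposτ : 0 < τ - h := by have := hh.2; linarith
      have hb : ‖Ct h‖ ≤ ∫ r in Set.Ioi (τ - h), D * min 1 r ∂ν := by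
        have hC : Ct h = ∫ r in Set.Ioi (τ - h), (P (r + h) u - w) ∂ν := rfl
        rw [hC]
        refine norm_integral_le_of_norm_le ((hmin_int.mono_set
          (Set.Ioi_subset_Ioi hposτ.le)).const_mul D) ?_
        refine (ae_restrict_iff' measurableSet_Ioi).2 (Filter.Eventually.of_forall fun r hr => ?_)
        have hrpos : τ - h < r := hr
        have hr0 : 0 < r := lt_trans hposτ hrpos
        have hb1 : ‖P (r + h) u - w‖ ≤ 2 * ‖u‖ := by
          calc ‖P (r + h) u - w‖ ≤ ‖P (r + h) u‖ + ‖w‖ := norm_sub_le _ _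
            _ ≤ ‖u‖ + ‖u‖ := add_le_add (hun _ (by linarith)) hwn
            _ = 2 * ‖u‖ := by ring
        have hb2 : ‖P (r + h) u - w‖ ≤ C0 * (r + h - τ) := by
          rw [hwdef]
          exact hLip τ (r + h) hτ.le (by linarith)
        rcases le_total r 1 with hr1 | hr1
        · rw [min_eq_right hr1]
          calc ‖P (r + h) u - w‖ ≤ C0 * (r + h - τ) := hb2
            _ ≤ C0 * r := by
                refine mul_le_mul_of_nonneg_left ?_ hC0pos.le
                have := hh.2; linarith
            _ ≤ D * r := mul_le_mul_of_nonneg_right (le_max_right _ _) hr0.le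
        · rw [min_eq_left hr1, mul_one]
          exact hb1.trans (le_max_left _ _)
      refine hb.trans ?_
      rw [integral_const_mul]
      exact mul_le_mul_of_nonneg_left (hKb _ hposτ) hDnn
    -- assembling
    have hn1 : ‖∫ h in Set.Ioo 0 (τ - σ), uφ h • (Dσ h - Ct h)‖ ≤ 2 * C0 * σ := by
      have hb : ‖∫ h in Set.Ioo 0 (τ - σ), uφ h • (Dσ h - Ct h)‖
          ≤ ∫ h in Set.Ioo 0 (τ - σ), (2 * C0 * σ) * (uφ h * Ttail ν ((τ - σ) - h)) := by
        refine norm_integral_le_of_norm_le ((hren (τ - σ) hτ'pos).1.const_mul _) ?_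
        refine (ae_restrict_iff' measurableSet_Ioo).2 (Filter.Eventually.of_forall fun h hh => ?_)
        calc ‖uφ h • (Dσ h - Ct h)‖ = |uφ h| * ‖Dσ h - Ct h‖ := hnsmul _ _
          _ = uφ h * ‖Dσ h - Ct h‖ := by rw [abs_of_nonneg (huφ0 h hh.1)]
          _ ≤ uφ h * ((2 * C0 * σ) * Ttail ν ((τ - σ) - h)) :=
              mul_le_mul_of_nonneg_left (hkey h hh) (huφ0 h hh.1)
          _ = (2 * C0 * σ) * (uφ h * Ttail ν ((τ - σ) - h)) := by ring
      refine hb.trans ?_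
      rw [integral_const_mul, (hren (τ - σ) hτ'pos).2, mul_one]
    have huφIco : Integrable (fun h => (D * K) * uφ h) (volume.restrict (Set.Ico (τ - σ) τ)) := by
      refine Integrable.mono' (g := fun _ => (D * K) * uφ (τ - σ))
        (integrableOn_const (by rw [Real.volume_Ico]; exact ENNReal.ofReal_ne_top))
        ((huφm.const_mul _).aestronglyMeasurable) ?_
      refine (ae_restrict_iff' measurableSet_Ico).2 (Filter.Eventually.of_forall fun h hh => ?_)
      rw [Real.norm_eq_abs, abs_mul, abs_of_nonneg (mul_nonneg hDnn hKnn),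
        abs_of_nonneg (huφ0 h (lt_of_lt_of_le hτ'pos hh.1))]
      exact mul_le_mul_of_nonneg_left (huφmono (τ - σ) h hτ'pos hh.1) (mul_nonneg hDnn hKnn)
    have hn2 : ‖∫ h in Set.Ico (τ - σ) τ, uφ h • Ct h‖ ≤ D * K * (uφ (τ / 2) * σ) := by
      have hb : ‖∫ h in Set.Ico (τ - σ) τ, uφ h • Ct h‖
          ≤ ∫ h in Set.Ico (τ - σ) τ, (D * K) * uφ h := by
        refine norm_integral_le_of_norm_le huφIco ?_
        refine (ae_restrict_iff' measurableSet_Ico).2 (Filter.Eventually.of_forall fun h hh => ?_)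
        have hh0 : 0 < h := lt_of_lt_of_le hτ'pos hh.1
        calc ‖uφ h • Ct h‖ = |uφ h| * ‖Ct h‖ := hnsmul _ _
          _ = uφ h * ‖Ct h‖ := by rw [abs_of_nonneg (huφ0 h hh0)]
          _ ≤ uφ h * (D * K) :=
              mul_le_mul_of_nonneg_left (hkey2 h hh) (huφ0 h hh0)
          _ = (D * K) * uφ h := by ring
      refine hb.trans ?_
      have hb2 : ∫ h in Set.Ico (τ - σ) τ, (D * K) * uφ h
          ≤ ∫ _ in Set.Ico (τ - σ) τ, (D * K) * uφ (τ / 2) := by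
        refine setIntegral_mono_on huφIco
          (integrableOn_const (by rw [Real.volume_Ico]; exact ENNReal.ofReal_ne_top))
          measurableSet_Ico fun h hh => ?_
        refine mul_le_mul_of_nonneg_left ?_ (mul_nonneg hDnn hKnn)
        exact (huφmono (τ - σ) h hτ'pos hh.1).trans (huφmono (τ / 2) (τ - σ) hτ2 hττ')
      refine hb2.trans ?_
      rw [setIntegral_const, smul_eq_mul, Real.volume_real_Ico_of_le (by linarith : τ - σ ≤ τ)]
      rw [show τ - (τ - σ) = σ by ring]
      exact le_of_eq (by ring)
    calc ‖P σ (cand P ν uφ u (τ - σ)) - cand P ν uφ u τ‖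
        = ‖(∫ h in Set.Ioo 0 (τ - σ), uφ h • (Dσ h - Ct h))
            - ∫ h in Set.Ico (τ - σ) τ, uφ h • Ct h‖ := by rw [hdiff]
      _ ≤ ‖∫ h in Set.Ioo 0 (τ - σ), uφ h • (Dσ h - Ct h)‖
            + ‖∫ h in Set.Ico (τ - σ) τ, uφ h • Ct h‖ := norm_sub_le _ _
      _ ≤ 2 * C0 * σ + D * K * (uφ (τ / 2) * σ) := add_le_add hn1 hn2
      _ = (2 * C0 + D * K * uφ (τ / 2)) * σ := by ring
  -- pointwise evaluation bound
  have hpt : ∀ (f : C₀(E, ℝ)) (y : E), |f y| ≤ ‖f‖ := by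
    intro f y
    have h1 := f.toBCF.norm_coe_le_norm y
    rw [ZeroAtInftyContinuousMap.norm_toBCF_eq_norm] at h1
    simpa using h1
  have hptsub : ∀ (f g : C₀(E, ℝ)) (y : E), |f y - g y| ≤ ‖f - g‖ := by
    intro f g y
    have := hpt (f - g) y
    simpa using this
  set F : ℝ → ℝ := fun s => (P s (cand P ν uφ u (max (t - s) 0))) x with hFdef
  set c : ℝ := (cand P ν uφ u t) x with hcdef
  -- continuity of F on (0, t)
  have hFc1 : ContinuousOn F (Set.Ioo 0 t) := by
    intro s₀ hs₀
    rw [Metric.continuousWithinAt_iff]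
    intro ε hε
    set C1' : ℝ := 2 * C0 + D * K * uφ ((t - s₀) / 2) with hC1'def
    have hts₀ : 0 < t - s₀ := by have := hs₀.2; linarith
    have hC1'nn : 0 ≤ C1' := by
      rw [hC1'def]
      have := huφ0 ((t - s₀) / 2) (by linarith)
      positivity
    refine ⟨min ((t - s₀) / 4) (ε / (C1' + 1)), by positivity, fun s hs hdist => ?_⟩
    rcases eq_or_ne s s₀ with rfl | hne
    · simpa using hε
    set a : ℝ := min s s₀ with hadef
    set b : ℝ := max s s₀ with hbdef
    set σ : ℝ := b - a with hσdef
    have hσabs : σ = |s - s₀| := by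
      rw [hσdef, hadef, hbdef, max_sub_min_eq_abs]
      try rfl
      try exact abs_sub_comm _ _
    have hσpos : 0 < σ := by
      rw [hσabs]
      exact abs_pos.2 (sub_ne_zero.2 hne)
    have hσlt : σ < min ((t - s₀) / 4) (ε / (C1' + 1)) := by
      rw [hσabs, ← Real.dist_eq]
      exact hdist
    have ha : 0 < a := lt_min hs.1 hs₀.1
    have hbt : b < t := max_lt hs.2 hs₀.2
    have has₀ : a ≤ s₀ := min_le_right _ _
    have hta : 0 < t - a := by linarith
    have hσle : σ ≤ (t - a) / 2 := by
      have h1 : σ < (t - s₀) / 4 := lt_of_lt_of_le hσlt (min_le_left _ _)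
      have h2 : t - s₀ ≤ t - a := by linarith
      linarith
    have hball : b = a + σ := by rw [hσdef]; ring
    have htb : t - b = (t - a) - σ := by rw [hball]; ring
    have hmaxa : max (t - a) 0 = t - a := max_eq_left (by linarith)
    have hmaxb : max (t - b) 0 = t - b := max_eq_left (by linarith)
    have hFb : F b = (P a (P σ (cand P ν uφ u ((t - a) - σ)))) x := by
      rw [hFdef]
      simp only
      rw [hmaxb, htb, hball, hPsg a σ ha.le hσpos.le]
      rfl
    have hFa : F a = (P a (cand P ν uφ u (t - a))) x := by
      rw [hFdef]; simp only [hmaxa]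
    have hkey : |F b - F a| ≤ C1' * σ := by
      rw [hFb, hFa]
      refine (hptsub _ _ x).trans ?_
      rw [← map_sub]
      refine (hPcon a ha.le _).trans ?_
      refine (MAIN (t - a) σ hta hσpos hσle).trans ?_
      refine mul_le_mul_of_nonneg_right ?_ hσpos.le
      rw [hC1'def]
      have h1 : uφ ((t - a) / 2) ≤ uφ ((t - s₀) / 2) := by
        refine huφmono ((t - s₀) / 2) ((t - a) / 2) (by linarith) (by linarith)
      have h2 : 0 ≤ D * K := mul_nonneg hDnn hKnn
      nlinarith
    have hcases : (a = s ∧ b = s₀) ∨ (a = s₀ ∧ b = s) := by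
      rcases le_total s s₀ with h | h
      · left; exact ⟨min_eq_left h, max_eq_right h⟩
      · right; exact ⟨min_eq_right h, max_eq_left h⟩
    have hdFF : dist (F s) (F s₀) ≤ C1' * σ := by
      rcases hcases with ⟨h1, h2⟩ | ⟨h1, h2⟩
      · rw [dist_comm, Real.dist_eq, ← h1, ← h2]
        exact hkey
      · rw [Real.dist_eq, ← h1, ← h2]
        exact hkey
    refine lt_of_le_of_lt hdFF ?_
    have hσ2 : σ < ε / (C1' + 1) := lt_of_lt_of_le hσlt (min_le_right _ _)
    have h3 : σ * (C1' + 1) < ε := by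
      rw [← lt_div_iff₀ (by positivity)]
      exact hσ2
    calc C1' * σ = σ * C1' := mul_comm _ _
      _ ≤ σ * (C1' + 1) := mul_le_mul_of_nonneg_left (by linarith) hσpos.le
      _ < ε := h3
  -- continuity of F on (t, ∞)
  have hFc2 : ContinuousOn F (Set.Ioi t) := by
    have hg : Continuous fun s : ℝ => (P (max s 0) u) x := by
      have hL : LipschitzWith (Real.toNNReal C0) (fun s : ℝ => (P (max s 0) u) x) := by
        refine LipschitzWith.of_dist_le_mul fun s s' => ?_
        rw [Real.dist_eq]
        refine (hptsub _ _ x).trans ?_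
        have := hvlip.dist_le_mul s s'
        rw [dist_eq_norm, Real.dist_eq] at this
        exact this
      exact hL.continuous
    refine (hg.continuousOn).congr fun s hs => ?_
    have hst : t < s := hs
    rw [hFdef]
    simp only
    rw [max_eq_right (by linarith : t - s ≤ 0), hcand0, max_eq_left (by linarith : (0:ℝ) ≤ s)]
  -- global bound by 2‖u‖
  have hFbdd : ∀ s : ℝ, 0 < s → |F s - c| ≤ 2 * ‖u‖ := by
    intro s hs
    rw [hFdef, hcdef]
    simp only
    refine (hptsub _ _ x).trans ?_
    calc ‖P s (cand P ν uφ u (max (t - s) 0)) - cand P ν uφ u t‖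
        ≤ ‖P s (cand P ν uφ u (max (t - s) 0))‖ + ‖cand P ν uφ u t‖ := norm_sub_le _ _
      _ ≤ ‖u‖ + ‖u‖ := by
          refine add_le_add ?_ (hcand_norm t ht.le)
          refine (hPcon s hs.le _).trans ?_
          exact hcand_norm _ (le_max_right _ _)
      _ = 2 * ‖u‖ := by ring
  -- ## final assembly
  set C1 : ℝ := 2 * C0 + D * K * uφ (t / 2) with hC1def
  have ht2 : 0 < t / 2 := by linarith
  have hC1nn : 0 ≤ C1 := by
    rw [hC1def]
    have := huφ0 (t / 2) ht2
    positivity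
  have hdom : ∀ s ∈ Set.Ioc (0:ℝ) (t / 2), |F s - c| ≤ (C1 * max 1 (t / 2)) * min 1 s := by
    intro s hhs
    have hs0 : 0 < s := hhs.1
    have hst2 : s ≤ t / 2 := hhs.2
    have hst : s < t := by linarith
    have hmax : max (t - s) 0 = t - s := max_eq_left (by linarith)
    have h1 : |F s - c| ≤ C1 * s := by
      rw [hFdef, hcdef]
      simp only
      rw [hmax]
      refine (hptsub _ _ x).trans ?_
      exact MAIN t s ht hs0 hst2
    refine h1.trans ?_
    have h2 : s ≤ max 1 (t / 2) * min 1 s := by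
      rcases le_total s 1 with h | h
      · rw [min_eq_right h]
        exact le_mul_of_one_le_left hs0.le (le_max_left 1 (t / 2))
      · rw [min_eq_left h, mul_one]
        exact hst2.trans (le_max_right _ _)
    calc C1 * s ≤ C1 * (max 1 (t / 2) * min 1 s) := mul_le_mul_of_nonneg_left h2 hC1nn
      _ = (C1 * max 1 (t / 2)) * min 1 s := by ring
  have hint1 : IntegrableOn (fun s => F s - c) (Set.Ioc 0 (t / 2)) ν := by
    have hsub1 : Set.Ioc (0:ℝ) (t / 2) ⊆ Set.Ioo 0 t := fun s hs =>
      ⟨hs.1, lt_of_le_of_lt hs.2 (by linarith)⟩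
    refine Integrable.mono' (g := fun s => (C1 * max 1 (t / 2)) * min 1 s)
      ((hmin_int.mono_set (fun s hs => hs.1)).const_mul _)
      (((hFc1.mono hsub1).sub continuousOn_const).aestronglyMeasurable measurableSet_Ioc) ?_
    refine (ae_restrict_iff' measurableSet_Ioc).2 (Filter.Eventually.of_forall fun s hs => ?_)
    rw [Real.norm_eq_abs]
    exact hdom s hs
  have hint2 : IntegrableOn (fun s => F s - c) (Set.Ioo (t / 2) t) ν := by
    have hsub2 : Set.Ioo (t / 2) t ⊆ Set.Ioo 0 t := fun s hs => ⟨lt_trans ht2 hs.1, hs.2⟩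
    refine Integrable.mono' (g := fun _ => 2 * ‖u‖)
      (integrableOn_const ((lt_of_le_of_lt
        (measure_mono (fun s hs => hs.1)) (hfin _ ht2))).ne)
      (((hFc1.mono hsub2).sub continuousOn_const).aestronglyMeasurable measurableSet_Ioo) ?_
    refine (ae_restrict_iff' measurableSet_Ioo).2 (Filter.Eventually.of_forall fun s hs => ?_)
    rw [Real.norm_eq_abs]
    exact hFbdd s (lt_trans ht2 hs.1)
  have hint3 : IntegrableOn (fun s => F s - c) {t} ν := by
    refine (integrableOn_singleton_iff (hfx := by simp)).2 (Or.inr ?_)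
    refine lt_of_le_of_lt (measure_mono ?_) (hfin _ ht2)
    intro y hy
    rw [Set.mem_singleton_iff] at hy
    rw [hy]
    exact Set.mem_Ioi.2 (by linarith)
  have hint4 : IntegrableOn (fun s => F s - c) (Set.Ioi t) ν := by
    refine Integrable.mono' (g := fun _ => 2 * ‖u‖)
      (integrableOn_const ((hfin _ ht)).ne)
      ((hFc2.sub continuousOn_const).aestronglyMeasurable measurableSet_Ioi) ?_
    refine (ae_restrict_iff' measurableSet_Ioi).2 (Filter.Eventually.of_forall fun s hs => ?_)
    rw [Real.norm_eq_abs]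
    exact hFbdd s (lt_trans ht hs)
  have hsetsplit : Set.Ioi (0:ℝ)
      = Set.Ioc 0 (t / 2) ∪ (Set.Ioo (t / 2) t ∪ ({t} ∪ Set.Ioi t)) := by
    have e1 : ({t} ∪ Set.Ioi t : Set ℝ) = Set.Ici t := by
      ext y
      simp only [Set.mem_union, Set.mem_singleton_iff, Set.mem_Ioi, Set.mem_Ici]
      constructor
      · rintro (rfl | h)
        · exact le_refl _
        · exact h.le
      · intro h
        rcases eq_or_lt_of_le h with h' | h'
        · exact Or.inl h'.symm
        · exact Or.inr h'
    rw [e1, Set.Ioo_union_Ici_eq_Ioi (by linarith : t / 2 < t),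
      Set.Ioc_union_Ioi_eq_Ioi (by linarith : (0:ℝ) ≤ t / 2)]
  show IntegrableOn (fun s => F s - c) (Set.Ioi 0) ν
  rw [hsetsplit]
  exact hint1.union (hint2.union (hint3.union hint4))
end

section
/- Strict negativity at a positive interior maximum (the key comparison step in the uniqueness proof): let h : E × [0,∞) → ℝ be such that h(·,τ) ∈ C₀(E) for every τ ≥ 0 and h(·,0) ≡ 0, and suppose (x⋆,t⋆) ∈ E × (0,∞) satisfies h(x⋆,t⋆) ≥ h(x,t) for all (x,t) ∈ E × [0,t⋆] and h(x⋆,t⋆) > 0. If the function s ↦ (P_s h(·,(t⋆−s)∨0))(x⋆) − h(x⋆,t⋆) is ν-integrable on (0,∞), then ∫₀^∞ ((P_s h(·,(t⋆−s)∨0))(x⋆) − h(x⋆,t⋆)) ν(ds) ≤ −h(x⋆,t⋆)·ν([t⋆,∞)) < 0. -/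
open MeasureTheory Set Filter Topology
open scoped ZeroAtInfty

/-! At a positive maximum `M = h(x⋆, t⋆)`, every `f = h(·, τ)` with `τ ≤ t⋆` satisfies `f ≤ M`
with `M ≥ 0`, hence `P_s f ≤ P_s f⁺ ≤ ‖f⁺‖ ≤ M` by positivity and contractivity: the integrand is
nonpositive. For `s ≥ t⋆` it equals `P_s 0 - M = -M`, so the integral is at most `-M ν([t⋆, ∞))`,
which is negative because the tail of `ν` is positive and, by the Lévy integrability condition,
finite away from `0`. -/

namespace ZeroAtInftyContinuousMap

variable {E : Type*} [TopologicalSpace E]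

noncomputable def posPart (f : C₀(E, ℝ)) : C₀(E, ℝ) where
  toFun x := max (f x) 0
  continuous_toFun := (map_continuous f).max continuous_const
  zero_at_infty' := by
    simpa using (zero_at_infty f).max (tendsto_const_nhds (x := (0 : ℝ)))

@[simp]
theorem posPart_apply (f : C₀(E, ℝ)) (x : E) : f.posPart x = max (f x) 0 := rfl

theorem norm_posPart_le {f : C₀(E, ℝ)} {M : ℝ} (hM : 0 ≤ M) (hf : ∀ x, f x ≤ M) :
    ‖f.posPart‖ ≤ M := by
  rw [← norm_toBCF_eq_norm, BoundedContinuousFunction.norm_le hM]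
  intro x
  simpa [abs_of_nonneg] using max_le (hf x) hM

theorem apply_le_norm (f : C₀(E, ℝ)) (x : E) : f x ≤ ‖f‖ :=
  (le_abs_self _).trans (f.toBCF.norm_coe_le_norm x)

theorem apply_le_of_le_of_nonneg {F : Type*} [FunLike F C₀(E, ℝ) C₀(E, ℝ)]
    [AddMonoidHomClass F C₀(E, ℝ) C₀(E, ℝ)] (T : F)
    (hTpos : ∀ f : C₀(E, ℝ), (∀ x, 0 ≤ f x) → ∀ x, 0 ≤ T f x)
    (hTcon : ∀ f : C₀(E, ℝ), ‖T f‖ ≤ ‖f‖)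
    {f : C₀(E, ℝ)} {M : ℝ} (hM : 0 ≤ M) (hf : ∀ x, f x ≤ M) (x : E) : T f x ≤ M := by
  have hmono : T f x ≤ T f.posPart x := by
    have := hTpos (f.posPart - f) (fun y => by simp) x
    rwa [map_sub, coe_sub, Pi.sub_apply, sub_nonneg] at this
  calc T f x ≤ T f.posPart x := hmono
    _ ≤ ‖T f.posPart‖ := apply_le_norm _ x
    _ ≤ ‖f.posPart‖ := hTcon _
    _ ≤ M := norm_posPart_le hM hf

end ZeroAtInftyContinuousMap

theorem measure_Ici_ne_top_of_lintegral_min_one_ne_top {ν : Measure ℝ}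
    (hν : ∫⁻ s in Ioi (0 : ℝ), ENNReal.ofReal (min 1 s) ∂ν ≠ ⊤) {t : ℝ} (ht : 0 < t) :
    ν (Ici t) ≠ ⊤ := by
  have hbound : ENNReal.ofReal (min 1 t) * ν (Ici t)
      ≤ ∫⁻ s in Ioi (0 : ℝ), ENNReal.ofReal (min 1 s) ∂ν :=
    calc ENNReal.ofReal (min 1 t) * ν (Ici t)
        = ∫⁻ _ in Ici t, ENNReal.ofReal (min 1 t) ∂ν := by rw [setLIntegral_const, mul_comm]
      _ ≤ ∫⁻ s in Ici t, ENNReal.ofReal (min 1 s) ∂ν :=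
          setLIntegral_mono' measurableSet_Ici fun s hs =>
            ENNReal.ofReal_le_ofReal (min_le_min le_rfl hs)
      _ ≤ ∫⁻ s in Ioi (0 : ℝ), ENNReal.ofReal (min 1 s) ∂ν :=
          lintegral_mono_set fun s hs => ht.trans_le hs
  intro htop
  rw [htop, ENNReal.mul_top (by simpa using lt_min one_pos ht), top_le_iff] at hbound
  exact hν hbound

theorem setIntegral_le_mul_measureReal_of_le_indicator {α : Type*} [MeasurableSpace α]
    {μ : Measure α} {f : α → ℝ} {S T : Set α} (hS : MeasurableSet S) (hT : MeasurableSet T)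
    (hST : S ⊆ T) (hμS : μ S ≠ ⊤) (hf : IntegrableOn f T μ) {c : ℝ}
    (hle : ∀ s ∈ T, f s ≤ S.indicator (fun _ => c) s) :
    ∫ s in T, f s ∂μ ≤ c * μ.real S := by
  have hind : IntegrableOn (S.indicator fun _ => c) T μ :=
    ((integrable_indicator_iff hS).mpr (integrableOn_const hμS)).integrableOn
  calc ∫ s in T, f s ∂μ ≤ ∫ s in T, S.indicator (fun _ => c) s ∂μ :=
        setIntegral_mono_on hf hind hT hle
    _ = c * μ.real S := by
        rw [setIntegral_indicator hS, inter_eq_right.mpr hST, setIntegral_const, smul_eq_mul,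
          mul_comm]

theorem ctrw_overshoot_positive_maximum_general
    {E : Type*} [MetricSpace E]
    (P : ℝ → C₀(E, ℝ) →L[ℝ] C₀(E, ℝ))
    (hPpos : ∀ t : ℝ, 0 ≤ t → ∀ f : C₀(E, ℝ), (∀ x, 0 ≤ f x) → ∀ x, 0 ≤ P t f x)
    (hPcon : ∀ t : ℝ, 0 ≤ t → ∀ f : C₀(E, ℝ), ‖P t f‖ ≤ ‖f‖)
    (ν : Measure ℝ)
    (hν1 : ∫⁻ s in Set.Ioi (0 : ℝ), ENNReal.ofReal (min 1 s) ∂ν ≠ ⊤)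
    (hνpos : ∀ t : ℝ, 0 < t → 0 < ν (Set.Ioi t))
    (h : ℝ → C₀(E, ℝ)) (hh0 : h 0 = 0)
    (xstar : E) (tstar : ℝ) (htstar : 0 < tstar)
    (hmax : ∀ (x : E) (t : ℝ), 0 ≤ t → t ≤ tstar → (h t) x ≤ (h tstar) xstar)
    (hpos : 0 < (h tstar) xstar)
    (hint : IntegrableOn
      (fun s : ℝ => (P s (h (max (tstar - s) 0))) xstar - (h tstar) xstar) (Set.Ioi 0) ν) :
    (∫ s in Set.Ioi (0 : ℝ), ((P s (h (max (tstar - s) 0))) xstar - (h tstar) xstar) ∂ν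
        ≤ -((h tstar) xstar) * (ν (Set.Ici tstar)).toReal) ∧
    -((h tstar) xstar) * (ν (Set.Ici tstar)).toReal < 0 := by
  have hfin := measure_Ici_ne_top_of_lintegral_min_one_ne_top hν1 htstar
  have hbound : ∀ s ∈ Ioi (0 : ℝ), (P s (h (max (tstar - s) 0))) xstar - h tstar xstar
      ≤ (Ici tstar).indicator (fun _ => -h tstar xstar) s := by
    intro s hs
    rcases le_or_gt tstar s with hst | hst
    · rw [max_eq_right (by linarith), hh0, indicator_of_mem (mem_Ici.mpr hst), map_zero]
      simp
    · rw [indicator_of_notMem (notMem_Ici.mpr hst), sub_nonpos]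
      exact ZeroAtInftyContinuousMap.apply_le_of_le_of_nonneg (P s) (hPpos s hs.le)
        (hPcon s hs.le) hpos.le
        (fun x => hmax x _ (le_max_right _ _) (max_le (sub_le_self _ hs.le) htstar.le)) xstar
  refine ⟨setIntegral_le_mul_measureReal_of_le_indicator measurableSet_Ici measurableSet_Ioi
    (fun s hs => htstar.trans_le hs) hfin hint hbound, ?_⟩
  have hνIci : 0 < (ν (Ici tstar)).toReal :=
    ENNReal.toReal_pos ((hνpos tstar htstar).trans_le (measure_mono Ioi_subset_Ici_self)).ne' hfin
  exact mul_neg_of_neg_of_pos (neg_neg_of_pos hpos) hνIci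

/-- Strict negativity of the coupled space-time nonlocal operator at a positive interior
maximum: if `h(·,0) ≡ 0`, `(xstar,tstar)` is a maximum over `E × [0,tstar]` with `h(xstar,tstar) > 0`,
then `∫₀^∞ ((P_s h(·,(tstar-s)∨0))(xstar) - h(xstar,tstar)) ν(ds) ≤ -h(xstar,tstar)·ν([tstar,∞)) < 0`. -/
theorem ctrw_overshoot_positive_maximum
    {E : Type*} [MetricSpace E] [TopologicalSpace.SeparableSpace E] [LocallyCompactSpace E]
    (P : ℝ → C₀(E, ℝ) →L[ℝ] C₀(E, ℝ))
    (hP0 : P 0 = ContinuousLinearMap.id ℝ C₀(E, ℝ))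
    (hPsg : ∀ s t : ℝ, 0 ≤ s → 0 ≤ t → P (s + t) = (P s).comp (P t))
    (hPpos : ∀ t : ℝ, 0 ≤ t → ∀ f : C₀(E, ℝ), (∀ x, 0 ≤ f x) → ∀ x, 0 ≤ P t f x)
    (hPcon : ∀ t : ℝ, 0 ≤ t → ∀ f : C₀(E, ℝ), ‖P t f‖ ≤ ‖f‖)
    (hPsc : ∀ f : C₀(E, ℝ), Tendsto (fun t => P t f) (𝓝[≥] (0 : ℝ)) (𝓝 f))
    (ν : Measure ℝ)
    (hν1 : ∫⁻ s in Set.Ioi (0 : ℝ), ENNReal.ofReal (min 1 s) ∂ν ≠ ⊤)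
    (hνpos : ∀ t : ℝ, 0 < t → 0 < ν (Set.Ioi t))
    (h : ℝ → C₀(E, ℝ)) (hh0 : h 0 = 0)
    (xstar : E) (tstar : ℝ) (htstar : 0 < tstar)
    (hmax : ∀ (x : E) (t : ℝ), 0 ≤ t → t ≤ tstar → (h t) x ≤ (h tstar) xstar)
    (hpos : 0 < (h tstar) xstar)
    (hint : IntegrableOn
      (fun s : ℝ => (P s (h (max (tstar - s) 0))) xstar - (h tstar) xstar) (Set.Ioi 0) ν) :
    (∫ s in Set.Ioi (0 : ℝ), ((P s (h (max (tstar - s) 0))) xstar - (h tstar) xstar) ∂ν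
        ≤ -((h tstar) xstar) * (ν (Set.Ici tstar)).toReal) ∧
    -((h tstar) xstar) * (ν (Set.Ici tstar)).toReal < 0 :=
  ctrw_overshoot_positive_maximum_general P hPpos hPcon ν hν1 hνpos h hh0 xstar tstar htstar hmax
    hpos hint
end

section
/- Auxiliary lemma, part (a): for every u in D(G) and every t ≥ 0, the element Q(t) belongs to D(G); moreover G Q(t) = Q^G(t), where Q^G is defined like Q but with Gu in place of u (that is, Q^G(0) = Gu and Q^G(t) = ∫₀^t (∫_{(t−h,∞)} P_{r+h}(Gu) ν(dr)) u^φ(h) dh for t > 0), and ‖G Q(t)‖∞ ≤ ‖Gu‖∞ for all t ≥ 0. -/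
open MeasureTheory Set Filter Topology
open scoped ZeroAtInfty

/-!
For fixed `t > 0`, `v ↦ Q_v(t)` is a bounded linear operator of norm at most
`∫₀^t ν̄(t - h) u^φ(h) dh = 1`, and it commutes with every `P_s`, since `P_s` commutes with
each `P_{r+h}` and passes through Bochner integrals. So the difference quotient of `Q_u(t)` is
the image of the difference quotient of `u` under this operator, and converges to the image
of `Gu`.
-/

section Semigroup

variable {X : Type*} [NormedAddCommGroup X] [NormedSpace ℝ X]

structure IsContractionSemigroup (P : ℝ → X →L[ℝ] X) : Prop where
  map_add : ∀ s t : ℝ, 0 ≤ s → 0 ≤ t → P (s + t) = (P s).comp (P t)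
  norm_apply_le : ∀ t : ℝ, 0 ≤ t → ∀ v : X, ‖P t v‖ ≤ ‖v‖
  tendsto_nhdsGE_zero : ∀ v : X, Tendsto (fun t => P t v) (𝓝[≥] 0) (𝓝 v)

namespace IsContractionSemigroup

variable {P : ℝ → X →L[ℝ] X}

theorem apply_apply_comm (hP : IsContractionSemigroup P) {s r : ℝ} (hs : 0 ≤ s) (hr : 0 ≤ r)
    (v : X) : P s (P r v) = P r (P s v) := by
  rw [← ContinuousLinearMap.comp_apply, ← hP.map_add s r hs hr, add_comm, hP.map_add r s hr hs,
    ContinuousLinearMap.comp_apply]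

theorem norm_apply_sub_apply_le (hP : IsContractionSemigroup P) {a b : ℝ} (hb : 0 ≤ b)
    (hba : b ≤ a) (v : X) : ‖P a v - P b v‖ ≤ ‖P (a - b) v - v‖ :=
  calc ‖P a v - P b v‖ = ‖P b (P (a - b) v - v)‖ := by
        rw [map_sub, ← ContinuousLinearMap.comp_apply, ← hP.map_add _ _ hb (sub_nonneg.2 hba),
          add_sub_cancel]
    _ ≤ ‖P (a - b) v - v‖ := hP.norm_apply_le b hb _

theorem continuousOn (hP : IsContractionSemigroup P) (v : X) :
    ContinuousOn (fun s => P s v) (Ici 0) := by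
  intro s₀ hs₀
  have hdist : ∀ s ∈ Ici (0 : ℝ), dist (P s v) (P s₀ v) ≤ ‖P |s - s₀| v - v‖ := by
    intro s hs
    rcases le_total s₀ s with h | h
    · rw [dist_eq_norm, abs_of_nonneg (sub_nonneg.2 h)]
      exact hP.norm_apply_sub_apply_le hs₀ h v
    · rw [dist_comm, dist_eq_norm, abs_of_nonpos (sub_nonpos.2 h), neg_sub]
      exact hP.norm_apply_sub_apply_le hs h v
  have habs : Tendsto (fun s => |s - s₀|) (𝓝[Ici 0] s₀) (𝓝[≥] 0) :=
    tendsto_nhdsWithin_iff.2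
      ⟨((continuous_abs.comp (continuous_sub_right s₀)).tendsto' s₀ 0 (by simp)).mono_left
        nhdsWithin_le_nhds, Eventually.of_forall fun s => mem_Ici.2 (abs_nonneg _)⟩
  exact tendsto_iff_dist_tendsto_zero.2 <| squeeze_zero' (Eventually.of_forall fun _ => dist_nonneg)
    (eventually_nhdsWithin_of_forall hdist)
    (tendsto_iff_norm_sub_tendsto_zero.1 ((hP.tendsto_nhdsGE_zero v).comp habs))

end IsContractionSemigroup

theorem tendsto_smul_sub_map_of_commute (P : ℝ → X →L[ℝ] X) (L : X →L[ℝ] X) {u Gu : X}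
    (hL : ∀ h : ℝ, 0 < h → P h (L u) = L (P h u))
    (hu : Tendsto (fun h : ℝ => h⁻¹ • (P h u - u)) (𝓝[>] 0) (𝓝 Gu)) :
    Tendsto (fun h : ℝ => h⁻¹ • (P h (L u) - L u)) (𝓝[>] 0) (𝓝 (L Gu)) := by
  refine ((L.continuous.tendsto Gu).comp hu).congr' ?_
  filter_upwards [self_mem_nhdsWithin] with h hh
  simp [hL h hh]

end Semigroup

section LevyMeasure

variable {ν : Measure ℝ}

theorem measure_Ioi_lt_top_of_lintegral_min_one_ne_top
    (hν : ∫⁻ s in Ioi (0 : ℝ), ENNReal.ofReal (min 1 s) ∂ν ≠ ⊤) {a : ℝ}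
    (ha : 0 < a) : ν (Ioi a) < ⊤ := by
  have hmass : ENNReal.ofReal (min 1 a) * ν (Ioi a)
      ≤ ∫⁻ s in Ioi (0 : ℝ), ENNReal.ofReal (min 1 s) ∂ν :=
    calc ENNReal.ofReal (min 1 a) * ν (Ioi a)
        = ∫⁻ _ in Ioi a, ENNReal.ofReal (min 1 a) ∂ν := (setLIntegral_const _ _).symm
      _ ≤ ∫⁻ s in Ioi a, ENNReal.ofReal (min 1 s) ∂ν :=
          setLIntegral_mono' measurableSet_Ioi fun s hs =>
            ENNReal.ofReal_le_ofReal (min_le_min_left 1 (le_of_lt hs))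
      _ ≤ ∫⁻ s in Ioi (0 : ℝ), ENNReal.ofReal (min 1 s) ∂ν :=
          lintegral_mono_set (Ioi_subset_Ioi ha.le)
  exact ENNReal.lt_top_of_mul_ne_top_right (ne_top_of_le_ne_top hν hmass)
    (ENNReal.ofReal_pos.2 (lt_min one_pos ha)).ne'

theorem sigmaFinite_restrict_Ioi_zero (hν : ∀ a : ℝ, 0 < a → ν (Ioi a) < ⊤) :
    SigmaFinite (ν.restrict (Ioi 0)) := by
  refine Measure.sigmaFinite_of_countable
    (S := insert (Iic 0) (range fun n : ℕ => Ioi (1 / (n + 1 : ℝ))))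
    ((countable_range _).insert _) ?_ ?_
  · rintro _ (rfl | ⟨n, rfl⟩)
    · simp [Measure.restrict_apply measurableSet_Iic, Iic_inter_Ioi]
    · exact (Measure.restrict_apply_le _ _).trans_lt (hν _ (by positivity))
  · refine eq_univ_of_forall fun x => ?_
    rcases le_or_gt x 0 with hx | hx
    · exact mem_sUnion_of_mem (show x ∈ Iic 0 from hx) (mem_insert _ _)
    · obtain ⟨n, hn⟩ := exists_nat_one_div_lt hx
      exact mem_sUnion_of_mem (show x ∈ Ioi (1 / (n + 1 : ℝ)) from hn) (Or.inr ⟨n, rfl⟩)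

end LevyMeasure

section Overshoot

variable {X : Type*} [NormedAddCommGroup X] [NormedSpace ℝ X]
  {P : ℝ → X →L[ℝ] X} {ν : Measure ℝ} {uφ : ℝ → ℝ} {t h : ℝ}

noncomputable def overshootIntegral (P : ℝ → X →L[ℝ] X) (ν : Measure ℝ) (uφ : ℝ → ℝ)
    (t : ℝ) (v : X) : X :=
  ∫ h in Ioo 0 t, uφ h • ∫ r in Ioi (t - h), P (r + h) v ∂ν

theorem cand_eq_overshootIntegral {E : Type*} [TopologicalSpace E]
    {P : ℝ → C₀(E, ℝ) →L[ℝ] C₀(E, ℝ)} (ht : t ≠ 0) (u : C₀(E, ℝ)) :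
    cand P ν uφ u t = overshootIntegral P ν uφ t u :=
  if_neg ht

theorem add_nonneg_of_mem_Ioi_sub (hh : h ∈ Ioo 0 t) {r : ℝ} (hr : r ∈ Ioi (t - h)) :
    0 ≤ r + h := by
  linarith [mem_Ioi.1 hr, hh.1, hh.2]

theorem integrableOn_Ioi_semigroup (hP : IsContractionSemigroup P)
    (hν : ∀ a : ℝ, 0 < a → ν (Ioi a) < ⊤) (hh : h ∈ Ioo 0 t) (v : X) :
    IntegrableOn (fun r => P (r + h) v) (Ioi (t - h)) ν := by
  refine IntegrableOn.of_bound (hν _ (sub_pos.2 hh.2)) ?_ ‖v‖ ?_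
  · exact ((hP.continuousOn v).comp (continuous_add_const h).continuousOn
      fun r hr => add_nonneg_of_mem_Ioi_sub hh hr).aestronglyMeasurable measurableSet_Ioi
  · filter_upwards [ae_restrict_mem measurableSet_Ioi] with r hr
    exact hP.norm_apply_le _ (add_nonneg_of_mem_Ioi_sub hh hr) v

theorem norm_setIntegral_Ioi_semigroup_le (hP : IsContractionSemigroup P)
    (hν : ∀ a : ℝ, 0 < a → ν (Ioi a) < ⊤) (hh : h ∈ Ioo 0 t) (v : X) :
    ‖∫ r in Ioi (t - h), P (r + h) v ∂ν‖ ≤ (ν (Ioi (t - h))).toReal * ‖v‖ := by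
  rw [mul_comm]
  exact norm_setIntegral_le_of_norm_le_const (hν _ (sub_pos.2 hh.2)) fun r hr =>
    hP.norm_apply_le _ (add_nonneg_of_mem_Ioi_sub hh hr) v

theorem aestronglyMeasurable_setIntegral_Ioi_semigroup (hP : IsContractionSemigroup P)
    (hν : ∀ a : ℝ, 0 < a → ν (Ioi a) < ⊤) (v : X) :
    AEStronglyMeasurable (fun h => ∫ r in Ioi (t - h), P (r + h) v ∂ν)
      (volume.restrict (Ioo 0 t)) := by
  -- `ν` need not be s-finite, but its restriction to `(0, ∞)` is, and for `h < t` the tail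
  -- integral only sees `(0, ∞)`.
  have := sigmaFinite_restrict_Ioi_zero hν
  have hcont : Continuous fun s => P (max s 0) v :=
    (hP.continuousOn v).comp_continuous (continuous_id.max continuous_const)
      fun s => le_max_right s 0
  set g : ℝ × ℝ → X := {p | t - p.1 < p.2}.indicator fun p => P (max (p.2 + p.1) 0) v
  have hg : StronglyMeasurable g :=
    (hcont.comp (continuous_snd.add continuous_fst)).stronglyMeasurable.indicator
      (measurableSet_lt (measurable_const.sub measurable_fst) measurable_snd)
  refine (hg.integral_prod_right' (ν := ν.restrict (Ioi 0))).aestronglyMeasurable.congr ?_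
  filter_upwards [ae_restrict_mem measurableSet_Ioo] with h hh
  calc ∫ r, g (h, r) ∂ν.restrict (Ioi 0)
      = ∫ r in Ioi (t - h), P (max (r + h) 0) v ∂ν.restrict (Ioi 0) :=
        integral_indicator (s := Ioi (t - h)) (f := fun r => P (max (r + h) 0) v) measurableSet_Ioi
    _ = ∫ r in Ioi (t - h), P (max (r + h) 0) v ∂ν := by
        rw [Measure.restrict_restrict measurableSet_Ioi,
          inter_eq_left.2 (Ioi_subset_Ioi (sub_pos.2 hh.2).le)]
    _ = ∫ r in Ioi (t - h), P (r + h) v ∂ν :=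
        setIntegral_congr_fun measurableSet_Ioi fun r hr => by
          rw [max_eq_left (add_nonneg_of_mem_Ioi_sub hh hr)]

theorem lintegral_norm_smul_setIntegral_Ioi_le (hP : IsContractionSemigroup P)
    (hν : ∀ a : ℝ, 0 < a → ν (Ioi a) < ⊤) (huφ0 : ∀ h : ℝ, 0 < h → 0 ≤ uφ h) (v : X) :
    ∫⁻ h in Ioo 0 t, ENNReal.ofReal ‖uφ h • ∫ r in Ioi (t - h), P (r + h) v ∂ν‖ ≤
      (∫⁻ h in Ioo 0 t, ν (Ioi (t - h)) * ENNReal.ofReal (uφ h)) * ENNReal.ofReal ‖v‖ := by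
  rw [← lintegral_mul_const' _ _ ENNReal.ofReal_ne_top]
  refine setLIntegral_mono' measurableSet_Ioo fun h hh => ?_
  have huφh := huφ0 h hh.1
  calc ENNReal.ofReal ‖uφ h • ∫ r in Ioi (t - h), P (r + h) v ∂ν‖
      ≤ ENNReal.ofReal (uφ h * ((ν (Ioi (t - h))).toReal * ‖v‖)) := by
        rw [norm_smul, Real.norm_of_nonneg huφh]
        exact ENNReal.ofReal_le_ofReal (mul_le_mul_of_nonneg_left
          (norm_setIntegral_Ioi_semigroup_le hP hν hh v) huφh)
    _ = ν (Ioi (t - h)) * ENNReal.ofReal (uφ h) * ENNReal.ofReal ‖v‖ := by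
        rw [ENNReal.ofReal_mul huφh, ENNReal.ofReal_mul ENNReal.toReal_nonneg,
          ENNReal.ofReal_toReal (hν _ (sub_pos.2 hh.2)).ne]
        ring

theorem integrableOn_smul_setIntegral_Ioi (hP : IsContractionSemigroup P)
    (hν : ∀ a : ℝ, 0 < a → ν (Ioi a) < ⊤) (huφm : Measurable uφ)
    (huφ0 : ∀ h : ℝ, 0 < h → 0 ≤ uφ h)
    (hrenew : ∫⁻ h in Ioo 0 t, ν (Ioi (t - h)) * ENNReal.ofReal (uφ h) ≠ ⊤) (v : X) :
    IntegrableOn (fun h => uφ h • ∫ r in Ioi (t - h), P (r + h) v ∂ν) (Ioo 0 t) :=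
  ⟨huφm.aestronglyMeasurable.smul (aestronglyMeasurable_setIntegral_Ioi_semigroup hP hν v),
    (hasFiniteIntegral_iff_norm _).2 <|
      (lintegral_norm_smul_setIntegral_Ioi_le hP hν huφ0 v).trans_lt
        (ENNReal.mul_lt_top hrenew.lt_top ENNReal.ofReal_lt_top)⟩

theorem norm_overshootIntegral_le (hP : IsContractionSemigroup P)
    (hν : ∀ a : ℝ, 0 < a → ν (Ioi a) < ⊤) (huφ0 : ∀ h : ℝ, 0 < h → 0 ≤ uφ h)
    (hrenew : ∫⁻ h in Ioo 0 t, ν (Ioi (t - h)) * ENNReal.ofReal (uφ h) ≤ 1) (v : X) :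
    ‖overshootIntegral P ν uφ t v‖ ≤ ‖v‖ :=
  calc ‖overshootIntegral P ν uφ t v‖
      ≤ (∫⁻ h in Ioo 0 t,
          ENNReal.ofReal ‖uφ h • ∫ r in Ioi (t - h), P (r + h) v ∂ν‖).toReal :=
        norm_integral_le_lintegral_norm _
    _ ≤ (ENNReal.ofReal ‖v‖).toReal :=
        ENNReal.toReal_mono ENNReal.ofReal_ne_top <|
          (lintegral_norm_smul_setIntegral_Ioi_le hP hν huφ0 v).trans
            (by simpa using mul_le_mul_left hrenew (ENNReal.ofReal ‖v‖))
    _ = ‖v‖ := ENNReal.toReal_ofReal (norm_nonneg _)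

theorem overshootIntegral_add (hP : IsContractionSemigroup P)
    (hν : ∀ a : ℝ, 0 < a → ν (Ioi a) < ⊤) (huφm : Measurable uφ)
    (huφ0 : ∀ h : ℝ, 0 < h → 0 ≤ uφ h)
    (hrenew : ∫⁻ h in Ioo 0 t, ν (Ioi (t - h)) * ENNReal.ofReal (uφ h) ≠ ⊤) (v w : X) :
    overshootIntegral P ν uφ t (v + w) =
      overshootIntegral P ν uφ t v + overshootIntegral P ν uφ t w := by
  rw [overshootIntegral, overshootIntegral, overshootIntegral,
    ← integral_add (integrableOn_smul_setIntegral_Ioi hP hν huφm huφ0 hrenew v)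
      (integrableOn_smul_setIntegral_Ioi hP hν huφm huφ0 hrenew w)]
  refine setIntegral_congr_fun measurableSet_Ioo fun h hh => ?_
  simp only [map_add]
  rw [integral_add (integrableOn_Ioi_semigroup hP hν hh v)
    (integrableOn_Ioi_semigroup hP hν hh w), smul_add]

theorem overshootIntegral_smul (c : ℝ) (v : X) :
    overshootIntegral P ν uφ t (c • v) = c • overshootIntegral P ν uφ t v := by
  simp only [overshootIntegral, map_smul, integral_smul, smul_comm (uφ _) c]

theorem apply_overshootIntegral [CompleteSpace X] (hP : IsContractionSemigroup P)
    (hν : ∀ a : ℝ, 0 < a → ν (Ioi a) < ⊤) (huφm : Measurable uφ)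
    (huφ0 : ∀ h : ℝ, 0 < h → 0 ≤ uφ h)
    (hrenew : ∫⁻ h in Ioo 0 t, ν (Ioi (t - h)) * ENNReal.ofReal (uφ h) ≠ ⊤) {s : ℝ}
    (hs : 0 ≤ s) (v : X) :
    P s (overshootIntegral P ν uφ t v) = overshootIntegral P ν uφ t (P s v) := by
  rw [overshootIntegral, overshootIntegral,
    ← (P s).integral_comp_comm (integrableOn_smul_setIntegral_Ioi hP hν huφm huφ0 hrenew v)]
  refine setIntegral_congr_fun measurableSet_Ioo fun h hh => ?_
  rw [map_smul, ← (P s).integral_comp_comm (integrableOn_Ioi_semigroup hP hν hh v)]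
  exact congrArg _ <| setIntegral_congr_fun measurableSet_Ioi fun r hr =>
    hP.apply_apply_comm hs (add_nonneg_of_mem_Ioi_sub hh hr) v

noncomputable def overshootCLM (hP : IsContractionSemigroup P)
    (hν : ∀ a : ℝ, 0 < a → ν (Ioi a) < ⊤) (huφm : Measurable uφ)
    (huφ0 : ∀ h : ℝ, 0 < h → 0 ≤ uφ h)
    (hrenew : ∫⁻ h in Ioo 0 t, ν (Ioi (t - h)) * ENNReal.ofReal (uφ h) ≤ 1) :
    X →L[ℝ] X :=
  LinearMap.mkContinuous
    { toFun := overshootIntegral P ν uφ t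
      map_add' := overshootIntegral_add hP hν huφm huφ0
        (ne_top_of_le_ne_top ENNReal.one_ne_top hrenew)
      map_smul' := overshootIntegral_smul } 1
    fun v => (norm_overshootIntegral_le hP hν huφ0 hrenew v).trans_eq (one_mul _).symm

end Overshoot

theorem ctrw_overshoot_aux_a_general
    {E : Type*} [MetricSpace E]
    (P : ℝ → C₀(E, ℝ) →L[ℝ] C₀(E, ℝ))
    (hPsg : ∀ s t : ℝ, 0 ≤ s → 0 ≤ t → P (s + t) = (P s).comp (P t))
    (hPcon : ∀ t : ℝ, 0 ≤ t → ∀ f : C₀(E, ℝ), ‖P t f‖ ≤ ‖f‖)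
    (hPsc : ∀ f : C₀(E, ℝ), Tendsto (fun t => P t f) (𝓝[≥] (0 : ℝ)) (𝓝 f))
    (ν : Measure ℝ)
    (hν1 : ∫⁻ s in Set.Ioi (0 : ℝ), ENNReal.ofReal (min 1 s) ∂ν ≠ ⊤)
    (uφ : ℝ → ℝ) (huφm : Measurable uφ)
    (huφ0 : ∀ t : ℝ, 0 < t → 0 ≤ uφ t)
    (hrenew : ∀ t : ℝ, 0 < t →
      ∫⁻ h in Set.Ioo 0 t, ν (Set.Ioi (t - h)) * ENNReal.ofReal (uφ h) = 1)
    (u Gu : C₀(E, ℝ))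
    (hu : Tendsto (fun h : ℝ => h⁻¹ • (P h u - u)) (𝓝[>] (0 : ℝ)) (𝓝 Gu)) :
    ∀ t : ℝ, 0 ≤ t →
      Tendsto (fun h : ℝ => h⁻¹ • (P h (cand P ν uφ u t) - cand P ν uφ u t))
        (𝓝[>] (0 : ℝ)) (𝓝 (cand P ν uφ Gu t)) ∧
      ‖cand P ν uφ Gu t‖ ≤ ‖Gu‖ := by
  intro t ht
  rcases ht.eq_or_lt with rfl | ht
  · simpa [cand] using hu
  have hP : IsContractionSemigroup P := ⟨hPsg, hPcon, hPsc⟩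
  have hν : ∀ a : ℝ, 0 < a → ν (Ioi a) < ⊤ :=
    fun a ha => measure_Ioi_lt_top_of_lintegral_min_one_ne_top hν1 ha
  have hrenew_t := hrenew t ht
  let L := overshootCLM hP hν huφm huφ0 hrenew_t.le
  have hL : ∀ v, cand P ν uφ v t = L v := fun v => cand_eq_overshootIntegral ht.ne' v
  simp only [hL]
  have hcomm : ∀ h : ℝ, 0 < h → P h (L u) = L (P h u) := fun h hh =>
    apply_overshootIntegral hP hν huφm huφ0 (hrenew_t.trans_ne ENNReal.one_ne_top) hh.le u
  exact ⟨tendsto_smul_sub_map_of_commute P L hcomm hu,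
    norm_overshootIntegral_le hP hν huφ0 hrenew_t.le Gu⟩

/-- Auxiliary lemma, part (a): for every `u ∈ D(G)` and `t ≥ 0`, `Q(t) ∈ D(G)`,
`G Q(t) = Q^G(t)` and `‖G Q(t)‖∞ ≤ ‖Gu‖∞`. -/
theorem ctrw_overshoot_aux_a
    {E : Type*} [MetricSpace E] [TopologicalSpace.SeparableSpace E] [LocallyCompactSpace E]
    (P : ℝ → C₀(E, ℝ) →L[ℝ] C₀(E, ℝ))
    (hP0 : P 0 = ContinuousLinearMap.id ℝ C₀(E, ℝ))
    (hPsg : ∀ s t : ℝ, 0 ≤ s → 0 ≤ t → P (s + t) = (P s).comp (P t))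
    (hPpos : ∀ t : ℝ, 0 ≤ t → ∀ f : C₀(E, ℝ), (∀ x, 0 ≤ f x) → ∀ x, 0 ≤ P t f x)
    (hPcon : ∀ t : ℝ, 0 ≤ t → ∀ f : C₀(E, ℝ), ‖P t f‖ ≤ ‖f‖)
    (hPsc : ∀ f : C₀(E, ℝ), Tendsto (fun t => P t f) (𝓝[≥] (0 : ℝ)) (𝓝 f))
    (ν : Measure ℝ)
    (hν1 : ∫⁻ s in Set.Ioi (0 : ℝ), ENNReal.ofReal (min 1 s) ∂ν ≠ ⊤)
    (hνinf : ν (Set.Ioi (0 : ℝ)) = ⊤)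
    (hνpos : ∀ t : ℝ, 0 < t → 0 < ν (Set.Ioi t))
    (uφ : ℝ → ℝ) (huφm : Measurable uφ)
    (huφ0 : ∀ t : ℝ, 0 < t → 0 ≤ uφ t)
    (huφmono : ∀ s t : ℝ, 0 < s → s ≤ t → uφ t ≤ uφ s)
    (hrenew : ∀ t : ℝ, 0 < t →
      ∫⁻ h in Set.Ioo 0 t, ν (Set.Ioi (t - h)) * ENNReal.ofReal (uφ h) = 1)
    (hlog : ∫⁻ t in Set.Ioo (0 : ℝ) 1, ENNReal.ofReal (|Real.log t| * uφ t) ≠ ⊤)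
    (u Gu : C₀(E, ℝ))
    (hu : Tendsto (fun h : ℝ => h⁻¹ • (P h u - u)) (𝓝[>] (0 : ℝ)) (𝓝 Gu)) :
    ∀ t : ℝ, 0 ≤ t →
      Tendsto (fun h : ℝ => h⁻¹ • (P h (cand P ν uφ u t) - cand P ν uφ u t))
        (𝓝[>] (0 : ℝ)) (𝓝 (cand P ν uφ Gu t)) ∧
      ‖cand P ν uφ Gu t‖ ≤ ‖Gu‖ :=
  ctrw_overshoot_aux_a_general P hPsg hPcon hPsc ν hν1 uφ huφm huφ0 hrenew u Gu hu
end

section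
/- Resolvent-convolution identity (equation (4.16) in the proof of the main theorem): let u ∈ D(A) and v = Au, and let λ > 0. Let ν be a Borel measure on (0,∞) with ∫₀^∞ min(1,t) ν(dt) < ∞ and tail ν̄(t) := ν((t,∞)), and let U be a Borel measure on [0,∞) satisfying ∫_{[0,w]} ν̄(w−h) U(dh) = 1 for every w > 0. Then ∫_{[0,∞)} e^{−λh} U(dh) < ∞, the iterated Bochner integral ∫_{[0,∞)} ∫₀^∞ e^{−λ(h+t)} T_{t+h}(v − λu) ν̄(t) dt U(dh) converges absolutely, and it equals −u. -/
/-!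
Write `x = v - λu` and `g(s) = e^{-λs} T_s x`. Since `d/ds (e^{-λs} T_s u) = g(s)` and
`e^{-λs} T_s u → 0`, the resolvent integral `∫₀^∞ g` equals `-u`. Substituting `s = t + h` turns
the iterated integral into `∫_{[0,∞)} ∫₀^∞ 1_{h<s} ν̄(s-h) g(s) ds U(dh)`. By the renewal identity,
`∫_{[0,s)} ν̄(s-h) U(dh)` is at most `1` for every `s > 0` and equal to `1` unless `s` is an atom of
`U`, i.e. for Lebesgue-a.e. `s`; the first fact justifies Fubini, the second collapses the swapped
integral to `∫₀^∞ g`. The renewal identity also bounds the `U`-mass of intervals of a fixed length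
`δ` (with `ν̄(δ) > 0`), which makes the Laplace transform of `U` finite and `U` locally finite.
-/

open MeasureTheory Set Filter Topology

open scoped ENNReal

section Semigroup

variable {X : Type*} [NormedAddCommGroup X] [NormedSpace ℝ X] {T : ℝ → X →L[ℝ] X}

theorem norm_orbit_sub_le (hTsg : ∀ s t : ℝ, 0 ≤ s → 0 ≤ t → T (s + t) = (T s).comp (T t))
    (hTcon : ∀ t : ℝ, 0 ≤ t → ∀ f : X, ‖T t f‖ ≤ ‖f‖) (x : X) {r s : ℝ} (hr : 0 ≤ r)
    (hs : 0 ≤ s) : ‖T r x - T s x‖ ≤ ‖x - T |r - s| x‖ := by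
  wlog hrs : r ≤ s generalizing r s
  · rw [norm_sub_rev, abs_sub_comm]
    exact this hs hr (le_of_not_ge hrs)
  have hsplit : T s x = T r (T (s - r) x) := by
    rw [← ContinuousLinearMap.comp_apply, ← hTsg r (s - r) hr (sub_nonneg.2 hrs), add_sub_cancel]
  rw [abs_sub_comm, abs_of_nonneg (sub_nonneg.2 hrs), hsplit, ← map_sub]
  exact hTcon r hr _

theorem continuousOn_orbit (hTsg : ∀ s t : ℝ, 0 ≤ s → 0 ≤ t → T (s + t) = (T s).comp (T t))
    (hTcon : ∀ t : ℝ, 0 ≤ t → ∀ f : X, ‖T t f‖ ≤ ‖f‖)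
    (hTsc : ∀ f : X, Tendsto (fun t => T t f) (𝓝[≥] (0 : ℝ)) (𝓝 f)) (x : X) :
    ContinuousOn (fun s => T s x) (Ici 0) := by
  intro s hs
  rw [ContinuousWithinAt, tendsto_iff_norm_sub_tendsto_zero]
  have hdist : Tendsto (fun r => |r - s|) (𝓝[Ici 0] s) (𝓝[≥] 0) := by
    refine tendsto_nhdsWithin_iff.2 ⟨?_, Eventually.of_forall fun r => mem_Ici.2 (abs_nonneg _)⟩
    exact ((continuous_abs.comp (continuous_sub_right s)).tendsto' s 0 (by simp)).mono_left
      nhdsWithin_le_nhds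
  have hlim : Tendsto (fun r => ‖x - T |r - s| x‖) (𝓝[Ici 0] s) (𝓝 0) := by
    have h := ((tendsto_const_nhds : Tendsto (fun _ => x) _ (𝓝 x)).sub
      ((hTsc x).comp hdist)).norm
    rwa [sub_self, norm_zero] at h
  refine squeeze_zero' (Eventually.of_forall fun r => norm_nonneg _) ?_ hlim
  filter_upwards [self_mem_nhdsWithin] with r hr using norm_orbit_sub_le hTsg hTcon x hr hs

theorem hasDerivWithinAt_orbit (hTsg : ∀ s t : ℝ, 0 ≤ s → 0 ≤ t → T (s + t) = (T s).comp (T t))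
    {u v : X} (hu : Tendsto (fun h : ℝ => h⁻¹ • (T h u - u)) (𝓝[>] (0 : ℝ)) (𝓝 v))
    {s : ℝ} (hs : 0 ≤ s) : HasDerivWithinAt (fun r => T r u) (T s v) (Ioi s) s := by
  rw [hasDerivWithinAt_iff_tendsto_slope,
    show Ioi s \ {s} = Ioi s from sdiff_singleton_eq_self (lt_irrefl s)]
  have hshift : Tendsto (fun r => r - s) (𝓝[>] s) (𝓝[>] 0) := by
    refine tendsto_nhdsWithin_iff.2 ⟨?_, ?_⟩
    · exact ((continuous_sub_right s).tendsto' s 0 (sub_self s)).mono_left nhdsWithin_le_nhds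
    · filter_upwards [self_mem_nhdsWithin] with r (hr : s < r) using sub_pos.2 hr
  refine (((T s).continuous.tendsto v).comp (hu.comp hshift)).congr' ?_
  filter_upwards [self_mem_nhdsWithin] with r hr
  have hsplit := hTsg s (r - s) hs (sub_pos.2 hr).le
  rw [add_sub_cancel] at hsplit
  simp [slope_def_module, hsplit, smul_sub]

theorem continuousOn_exp_smul_orbit
    (hTsg : ∀ s t : ℝ, 0 ≤ s → 0 ≤ t → T (s + t) = (T s).comp (T t))
    (hTcon : ∀ t : ℝ, 0 ≤ t → ∀ f : X, ‖T t f‖ ≤ ‖f‖)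
    (hTsc : ∀ f : X, Tendsto (fun t => T t f) (𝓝[≥] (0 : ℝ)) (𝓝 f)) (x : X) (l : ℝ) :
    ContinuousOn (fun s => Real.exp (-(l * s)) • T s x) (Ici 0) :=
  (by fun_prop : Continuous fun s : ℝ => Real.exp (-(l * s))).continuousOn.smul
    (continuousOn_orbit hTsg hTcon hTsc x)

theorem norm_exp_smul_orbit_le (hTcon : ∀ t : ℝ, 0 ≤ t → ∀ f : X, ‖T t f‖ ≤ ‖f‖) (x : X) (l : ℝ)
    {s : ℝ} (hs : 0 ≤ s) : ‖Real.exp (-(l * s)) • T s x‖ ≤ Real.exp (-(l * s)) * ‖x‖ := by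
  rw [norm_smul, Real.norm_of_nonneg (Real.exp_pos _).le]
  exact mul_le_mul_of_nonneg_left (hTcon s hs x) (Real.exp_pos _).le

theorem intervalIntegral_exp_smul_orbit [CompleteSpace X]
    (hT0 : T 0 = ContinuousLinearMap.id ℝ X)
    (hTsg : ∀ s t : ℝ, 0 ≤ s → 0 ≤ t → T (s + t) = (T s).comp (T t))
    (hTcon : ∀ t : ℝ, 0 ≤ t → ∀ f : X, ‖T t f‖ ≤ ‖f‖)
    (hTsc : ∀ f : X, Tendsto (fun t => T t f) (𝓝[≥] (0 : ℝ)) (𝓝 f))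
    {u v : X} (hu : Tendsto (fun h : ℝ => h⁻¹ • (T h u - u)) (𝓝[>] (0 : ℝ)) (𝓝 v))
    (l : ℝ) {b : ℝ} (hb : 0 ≤ b) :
    ∫ s in 0..b, Real.exp (-(l * s)) • T s (v - l • u) = Real.exp (-(l * b)) • T b u - u := by
  have hcont (x : X) : ContinuousOn (fun s => Real.exp (-(l * s)) • T s x) (Icc 0 b) :=
    (continuousOn_exp_smul_orbit hTsg hTcon hTsc x l).mono Icc_subset_Ici_self
  have hderiv : ∀ s ∈ Ioo 0 b, HasDerivWithinAt (fun r => Real.exp (-(l * r)) • T r u)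
      (Real.exp (-(l * s)) • T s (v - l • u)) (Ioi s) s := by
    intro s hs
    have hd1 : HasDerivAt (fun r => Real.exp (-(l * r))) (Real.exp (-(l * s)) * -(l * 1)) s :=
      ((hasDerivAt_id s).const_mul l).neg.exp
    have hd := hd1.hasDerivWithinAt.smul (hasDerivWithinAt_orbit hTsg hu hs.1.le)
    refine hd.congr_deriv ?_
    rw [(T s).map_sub, (T s).map_smul]
    module
  rw [intervalIntegral.integral_eq_sub_of_hasDeriv_right_of_le hb (hcont u) hderiv
    ((hcont _).intervalIntegrable_of_Icc hb), hT0]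
  simp

theorem integrableOn_exp_smul_orbit
    (hTsg : ∀ s t : ℝ, 0 ≤ s → 0 ≤ t → T (s + t) = (T s).comp (T t))
    (hTcon : ∀ t : ℝ, 0 ≤ t → ∀ f : X, ‖T t f‖ ≤ ‖f‖)
    (hTsc : ∀ f : X, Tendsto (fun t => T t f) (𝓝[≥] (0 : ℝ)) (𝓝 f)) (x : X) {l : ℝ}
    (hl : 0 < l) :
    IntegrableOn (fun s => Real.exp (-(l * s)) • T s x) (Ioi 0) := by
  refine Integrable.mono' ((exp_neg_integrableOn_Ioi 0 hl).mul_const ‖x‖) ?_ ?_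
  · exact ((continuousOn_exp_smul_orbit hTsg hTcon hTsc x l).mono
      Ioi_subset_Ici_self).aestronglyMeasurable measurableSet_Ioi
  · filter_upwards [ae_restrict_mem measurableSet_Ioi] with s hs
    simpa [neg_mul] using norm_exp_smul_orbit_le hTcon x l hs.le

theorem tendsto_exp_smul_orbit_atTop (hTcon : ∀ t : ℝ, 0 ≤ t → ∀ f : X, ‖T t f‖ ≤ ‖f‖) (x : X)
    {l : ℝ} (hl : 0 < l) : Tendsto (fun b => Real.exp (-(l * b)) • T b x) atTop (𝓝 0) := by
  have hexp : Tendsto (fun b => Real.exp (-(l * b)) * ‖x‖) atTop (𝓝 0) := by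
    simpa using (Real.tendsto_exp_neg_atTop_nhds_zero.comp
      (tendsto_id.const_mul_atTop hl)).mul_const ‖x‖
  refine squeeze_zero_norm' ?_ hexp
  filter_upwards [eventually_ge_atTop 0] with b hb using norm_exp_smul_orbit_le hTcon x l hb

theorem integral_exp_smul_orbit_eq_neg [CompleteSpace X]
    (hT0 : T 0 = ContinuousLinearMap.id ℝ X)
    (hTsg : ∀ s t : ℝ, 0 ≤ s → 0 ≤ t → T (s + t) = (T s).comp (T t))
    (hTcon : ∀ t : ℝ, 0 ≤ t → ∀ f : X, ‖T t f‖ ≤ ‖f‖)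
    (hTsc : ∀ f : X, Tendsto (fun t => T t f) (𝓝[≥] (0 : ℝ)) (𝓝 f))
    {u v : X} (hu : Tendsto (fun h : ℝ => h⁻¹ • (T h u - u)) (𝓝[>] (0 : ℝ)) (𝓝 v))
    {l : ℝ} (hl : 0 < l) : ∫ s in Ioi 0, Real.exp (-(l * s)) • T s (v - l • u) = -u := by
  have hlim : Tendsto (fun b => Real.exp (-(l * b)) • T b u - u) atTop (𝓝 (-u)) := by
    simpa using (tendsto_exp_smul_orbit_atTop hTcon u hl).sub_const u
  refine tendsto_nhds_unique (intervalIntegral_tendsto_integral_Ioi 0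
    (integrableOn_exp_smul_orbit hTsg hTcon hTsc _ hl) tendsto_id) (hlim.congr' ?_)
  filter_upwards [eventually_ge_atTop 0] with b hb
  exact (intervalIntegral_exp_smul_orbit hT0 hTsg hTcon hTsc hu l hb).symm

end Semigroup

section KernelIntegrals

variable {α β E : Type*} [MeasurableSpace α] [MeasurableSpace β] [NormedAddCommGroup E]
  [NormedSpace ℝ E] {μ : Measure α} {ρ : Measure β}

theorem integrable_toReal_smul_prod [SFinite μ] [SFinite ρ] {k : α → β → ℝ≥0∞} {g : β → E}
    (hk : Measurable (Function.uncurry k)) (hg : Integrable g ρ)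
    (hk1 : ∀ᵐ b ∂ρ, ∫⁻ a, k a b ∂μ ≤ 1) :
    Integrable (Function.uncurry fun a b => (k a b).toReal • g b) (μ.prod ρ) := by
  refine ⟨hk.ennreal_toReal.aestronglyMeasurable.smul hg.1.comp_snd, ?_⟩
  have hbound (p : α × β) : ‖(k p.1 p.2).toReal • g p.2‖ₑ ≤ k p.1 p.2 * ‖g p.2‖ₑ := by
    rw [enorm_smul, Real.enorm_eq_ofReal ENNReal.toReal_nonneg]
    gcongr
    exact ENNReal.ofReal_toReal_le
  calc ∫⁻ p, ‖(k p.1 p.2).toReal • g p.2‖ₑ ∂μ.prod ρ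
      ≤ ∫⁻ p, k p.1 p.2 * ‖g p.2‖ₑ ∂μ.prod ρ := lintegral_mono hbound
    _ = ∫⁻ b, (∫⁻ a, k a b ∂μ) * ‖g b‖ₑ ∂ρ := by
        rw [lintegral_prod_symm (fun p => k p.1 p.2 * ‖g p.2‖ₑ)
          (hk.aemeasurable.mul hg.1.enorm.comp_snd)]
        refine lintegral_congr fun b => ?_
        dsimp only
        exact lintegral_mul_const _ (hk.comp measurable_prodMk_right)
    _ ≤ ∫⁻ b, ‖g b‖ₑ ∂ρ :=
        lintegral_mono_ae (hk1.mono fun b hb => mul_le_of_le_one_left zero_le hb)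
    _ < ⊤ := hg.2

theorem integral_toReal_smul_const_of_lintegral_eq_one [CompleteSpace E] {k : α → ℝ≥0∞}
    (hk : AEMeasurable k μ) (hfin : ∀ᵐ a ∂μ, k a ≠ ⊤) (h1 : ∫⁻ a, k a ∂μ = 1) (y : E) :
    ∫ a, (k a).toReal • y ∂μ = y := by
  rw [integral_smul_const, integral_toReal hk (hfin.mono fun a ha => ha.lt_top), h1,
    ENNReal.toReal_one, one_smul]

end KernelIntegrals

theorem setIntegral_Ioi_comp_add_right {E : Type*} [NormedAddCommGroup E] [NormedSpace ℝ E]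
    (f : ℝ → E) (h : ℝ) : ∫ t in Ioi 0, f (t + h) = ∫ s in Ioi h, f s := by
  simpa using (measurePreserving_add_right volume h).setIntegral_preimage_emb
    (MeasurableEquiv.addRight h).measurableEmbedding f (Ioi h)

theorem ae_measure_singleton_eq_zero {α : Type*} [MeasurableSpace α] [MeasurableSingletonClass α]
    (μ : Measure α) [SFinite μ] {ρ : Measure α} [NullSingletonClass ρ] : ∀ᵐ a ∂ρ, μ {a} = 0 := by
  have hcount := Measure.countable_meas_level_set_pos (μ := μ) measurable_id
  simp only [id, ofPred_eq_eq_singleton] at hcount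
  exact measure_mono_null (fun a ha => pos_iff_ne_zero.2 ha) (hcount.measure_zero ρ)

section UniformlyBoundedOnIntervals

variable {μ : Measure ℝ} {δ : ℝ} {C : ℝ≥0∞}

theorem restrict_Ici_measure_Icc_le (hμ : ∀ a, 0 ≤ a → μ (Icc a (a + δ)) ≤ C) (b : ℝ) :
    μ.restrict (Ici 0) (Icc b (b + δ)) ≤ C := by
  rw [Measure.restrict_apply' measurableSet_Ici]
  refine (measure_mono ?_).trans (hμ (max b 0) (le_max_right b 0))
  rintro y ⟨⟨hby, hyb⟩, hy : 0 ≤ y⟩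
  exact ⟨max_le hby hy, by rcases max_cases b 0 with ⟨h, _⟩ | ⟨h, _⟩ <;> rw [h] <;> linarith⟩

theorem isLocallyFiniteMeasure_restrict_Ici (hδ : 0 < δ) (hC : C ≠ ⊤)
    (hμ : ∀ a, 0 ≤ a → μ (Icc a (a + δ)) ≤ C) : IsLocallyFiniteMeasure (μ.restrict (Ici 0)) :=
  ⟨fun a => ⟨Icc (a - δ / 2) (a - δ / 2 + δ), Icc_mem_nhds (by linarith) (by linarith),
    (restrict_Ici_measure_Icc_le hμ _).trans_lt hC.lt_top⟩⟩

-- Split `[0, ∞)` into the intervals `[nδ, (n+1)δ]` and compare with a geometric series.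
theorem lintegral_exp_neg_Ici_ne_top (hδ : 0 < δ) (hC : C ≠ ⊤)
    (hμ : ∀ a, 0 ≤ a → μ (Icc a (a + δ)) ≤ C) {l : ℝ} (hl : 0 < l) :
    ∫⁻ h in Ici 0, ENNReal.ofReal (Real.exp (-(l * h))) ∂μ ≠ ⊤ := by
  set r := ENNReal.ofReal (Real.exp (-(l * δ)))
  have hr : r < 1 := ENNReal.ofReal_lt_one.2 (Real.exp_lt_one_iff.2 (by nlinarith))
  have hcover : Ici (0 : ℝ) ⊆ ⋃ n : ℕ, Icc (n * δ) (n * δ + δ) := by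
    intro h (hh : 0 ≤ h)
    have h1 : (⌊h / δ⌋₊ : ℝ) ≤ h / δ := Nat.floor_le (by positivity)
    have h2 : h / δ < ⌊h / δ⌋₊ + 1 := Nat.lt_floor_add_one _
    refine mem_iUnion.2 ⟨⌊h / δ⌋₊, (le_div_iff₀ hδ).1 h1, ?_⟩
    nlinarith [(div_lt_iff₀ hδ).1 h2]
  have hpiece (n : ℕ) :
      ∫⁻ h in Icc (n * δ) (n * δ + δ), ENNReal.ofReal (Real.exp (-(l * h))) ∂μ ≤ r ^ n * C := calc
    _ ≤ ∫⁻ _ in Icc (n * δ) (n * δ + δ), r ^ n ∂μ := by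
        refine setLIntegral_mono' measurableSet_Icc fun h hh => ?_
        rw [← ENNReal.ofReal_pow (Real.exp_pos _).le, ← Real.exp_nat_mul]
        exact ENNReal.ofReal_le_ofReal (Real.exp_le_exp.2 (by nlinarith [hh.1]))
    _ = r ^ n * μ (Icc (n * δ) (n * δ + δ)) := setLIntegral_const _ _
    _ ≤ r ^ n * C := by gcongr; exact hμ _ (by positivity)
  refine ne_top_of_le_ne_top ?_ (calc
    ∫⁻ h in Ici 0, ENNReal.ofReal (Real.exp (-(l * h))) ∂μ
      ≤ ∫⁻ h in ⋃ n : ℕ, Icc (n * δ) (n * δ + δ), ENNReal.ofReal (Real.exp (-(l * h))) ∂μ :=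
        lintegral_mono_set hcover
    _ ≤ ∑' n : ℕ, ∫⁻ h in Icc (n * δ) (n * δ + δ), ENNReal.ofReal (Real.exp (-(l * h))) ∂μ :=
        lintegral_iUnion_le _ _
    _ ≤ ∑' n : ℕ, r ^ n * C := ENNReal.tsum_le_tsum hpiece
    _ = (1 - r)⁻¹ * C := by rw [ENNReal.tsum_mul_right, ENNReal.tsum_geometric])
  exact ENNReal.mul_ne_top (ENNReal.inv_ne_top.2 (tsub_pos_of_lt hr).ne') hC

end UniformlyBoundedOnIntervals

section LevyTail

variable {ν : Measure ℝ}

theorem measurable_measure_Ioi (ν : Measure ℝ) : Measurable fun t => ν (Ioi t) :=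
  Antitone.measurable fun _ _ hst => measure_mono (Ioi_subset_Ioi hst)

theorem measure_Ioi_ne_top
    (hν1 : ∫⁻ s in Ioi (0 : ℝ), ENNReal.ofReal (min 1 s) ∂ν ≠ ⊤) {t : ℝ} (ht : 0 < t) :
    ν (Ioi t) ≠ ⊤ := by
  have hbound : ENNReal.ofReal (min 1 t) * ν (Ioi t) ≤
      ∫⁻ s in Ioi (0 : ℝ), ENNReal.ofReal (min 1 s) ∂ν := calc
    ENNReal.ofReal (min 1 t) * ν (Ioi t) = ∫⁻ _ in Ioi t, ENNReal.ofReal (min 1 t) ∂ν :=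
      (setLIntegral_const _ _).symm
    _ ≤ ∫⁻ s in Ioi t, ENNReal.ofReal (min 1 s) ∂ν :=
      setLIntegral_mono' measurableSet_Ioi fun s (hs : t < s) =>
        ENNReal.ofReal_le_ofReal (min_le_min_left 1 hs.le)
    _ ≤ ∫⁻ s in Ioi (0 : ℝ), ENNReal.ofReal (min 1 s) ∂ν :=
      lintegral_mono_set (Ioi_subset_Ioi ht.le)
  exact (ENNReal.lt_top_of_mul_ne_top_right (ne_top_of_le_ne_top hν1 hbound)
    (ENNReal.ofReal_pos.2 (lt_min one_pos ht)).ne').ne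

theorem measure_Ioi_le_restrict_min_add {t : ℝ} (ht : 0 < t) :
    ν (Ioi t) ≤ ν.restrict (Ioi 0) {s | t < min 1 s} + ν (Ioi 1) := by
  rw [Measure.restrict_apply' measurableSet_Ioi]
  refine (measure_mono fun s (hs : t < s) => ?_).trans (measure_union_le _ _)
  rcases le_or_gt s 1 with hs1 | hs1
  · exact Or.inl ⟨lt_min (by linarith) hs, ht.trans hs⟩
  · exact Or.inr hs1

theorem ofReal_exp_mul_toReal_measure_Ioi_le {l t : ℝ} (hl : 0 ≤ l) (ht : 0 < t) :
    ENNReal.ofReal (Real.exp (-(l * t)) * (ν (Ioi t)).toReal) ≤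
      ν.restrict (Ioi 0) {s | t < min 1 s} + ν (Ioi 1) * ENNReal.ofReal (Real.exp (-(l * t))) := by
  set e := ENNReal.ofReal (Real.exp (-(l * t)))
  have he : e ≤ 1 := ENNReal.ofReal_le_one.2 (Real.exp_le_one_iff.2 (by nlinarith))
  calc ENNReal.ofReal (Real.exp (-(l * t)) * (ν (Ioi t)).toReal) ≤ e * ν (Ioi t) := by
        rw [ENNReal.ofReal_mul (Real.exp_pos _).le]
        gcongr
        exact ENNReal.ofReal_toReal_le
    _ ≤ e * ν.restrict (Ioi 0) {s | t < min 1 s} + e * ν (Ioi 1) := by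
        rw [← mul_add]
        gcongr
        exact measure_Ioi_le_restrict_min_add ht
    _ ≤ ν.restrict (Ioi 0) {s | t < min 1 s} + ν (Ioi 1) * e := by
        rw [mul_comm e (ν (Ioi 1))]
        gcongr
        exact mul_le_of_le_one_left zero_le he

theorem integrableOn_exp_mul_measure_Ioi
    (hν1 : ∫⁻ s in Ioi (0 : ℝ), ENNReal.ofReal (min 1 s) ∂ν ≠ ⊤) {l : ℝ} (hl : 0 < l) :
    IntegrableOn (fun t => Real.exp (-(l * t)) * (ν (Ioi t)).toReal) (Ioi 0) := by
  set ν₀ := ν.restrict (Ioi 0)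
  have hmeas : Measurable fun t => Real.exp (-(l * t)) * (ν (Ioi t)).toReal :=
    (by fun_prop : Measurable fun t : ℝ => Real.exp (-(l * t))).mul
      (measurable_measure_Ioi ν).ennreal_toReal
  have hexp : ∫⁻ t in Ioi (0 : ℝ), ENNReal.ofReal (Real.exp (-(l * t))) < ⊤ := by
    simpa [neg_mul] using (exp_neg_integrableOn_Ioi 0 hl).lintegral_lt_top
  have hcake : ∫⁻ t in Ioi (0 : ℝ), ν₀ {s | t < min 1 s} ≠ ⊤ := by
    rwa [← lintegral_eq_lintegral_meas_lt ν₀ ?_ (by fun_prop)]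
    filter_upwards [ae_restrict_mem measurableSet_Ioi] with s (hs : 0 < s)
    exact le_min zero_le_one hs.le
  refine ⟨hmeas.aestronglyMeasurable, (hasFiniteIntegral_iff_ofReal (ae_of_all _ fun t =>
    mul_nonneg (Real.exp_pos _).le ENNReal.toReal_nonneg)).2 ?_⟩
  calc ∫⁻ t in Ioi 0, ENNReal.ofReal (Real.exp (-(l * t)) * (ν (Ioi t)).toReal)
      ≤ ∫⁻ t in Ioi 0,
          ν₀ {s | t < min 1 s} + ν (Ioi 1) * ENNReal.ofReal (Real.exp (-(l * t))) :=
        setLIntegral_mono' measurableSet_Ioi fun t ht =>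
          ofReal_exp_mul_toReal_measure_Ioi_le hl.le ht
    _ = (∫⁻ t in Ioi 0, ν₀ {s | t < min 1 s}) +
          ν (Ioi 1) * ∫⁻ t in Ioi 0, ENNReal.ofReal (Real.exp (-(l * t))) := by
        rw [lintegral_add_right _ (by fun_prop), lintegral_const_mul _ (by fun_prop)]
    _ < ⊤ := ENNReal.add_lt_top.2 ⟨hcake.lt_top,
        ENNReal.mul_lt_top (measure_Ioi_ne_top hν1 one_pos).lt_top hexp⟩

theorem integrableOn_toReal_measure_Ioi_smul_comp_add {E : Type*} [NormedAddCommGroup E]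
    [NormedSpace ℝ E] (hν1 : ∫⁻ s in Ioi (0 : ℝ), ENNReal.ofReal (min 1 s) ∂ν ≠ ⊤) {l : ℝ}
    (hl : 0 < l) {g : ℝ → E} {C : ℝ} (hg : ContinuousOn g (Ici 0))
    (hgC : ∀ s, 0 ≤ s → ‖g s‖ ≤ Real.exp (-(l * s)) * C) {h : ℝ} (hh : 0 ≤ h) :
    IntegrableOn (fun t => (ν (Ioi t)).toReal • g (t + h)) (Ioi 0) := by
  have hC : 0 ≤ C := by simpa using (norm_nonneg _).trans (hgC 0 le_rfl)
  have hshift : ContinuousOn (fun t => g (t + h)) (Ioi 0) :=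
    hg.comp (continuous_add_const h).continuousOn fun t (ht : 0 < t) =>
      mem_Ici.2 (by linarith)
  refine Integrable.mono' ((integrableOn_exp_mul_measure_Ioi hν1 hl).mul_const C)
    ((measurable_measure_Ioi ν).ennreal_toReal.aestronglyMeasurable.smul
      (hshift.aestronglyMeasurable measurableSet_Ioi)) ?_
  filter_upwards [ae_restrict_mem measurableSet_Ioi] with t (ht : 0 < t)
  rw [norm_smul, Real.norm_of_nonneg ENNReal.toReal_nonneg]
  calc (ν (Ioi t)).toReal * ‖g (t + h)‖
      ≤ (ν (Ioi t)).toReal * (Real.exp (-(l * (t + h))) * C) := by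
        gcongr
        exact hgC _ (by linarith)
    _ ≤ (ν (Ioi t)).toReal * (Real.exp (-(l * t)) * C) := by
        gcongr
        nlinarith
    _ = Real.exp (-(l * t)) * (ν (Ioi t)).toReal * C := by ring

end LevyTail

noncomputable def tailKernel (ν : Measure ℝ) (h s : ℝ) : ℝ≥0∞ :=
  if h < s then ν (Ioi (s - h)) else 0

section Renewal

variable {ν U : Measure ℝ}

theorem exists_measure_Ioi_ne_zero
    (hrenew : ∀ w : ℝ, 0 < w → ∫⁻ h in Icc 0 w, ν (Ioi (w - h)) ∂U = 1) :
    ∃ t₀, 0 < t₀ ∧ ν (Ioi t₀) ≠ 0 := by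
  by_contra! hzero
  have hν0 : ν (Ioi 0) = 0 := by
    refine measure_mono_null (fun s (hs : 0 < s) => ?_)
      (measure_iUnion_null fun n : ℕ => hzero (1 / (n + 1)) Nat.one_div_pos_of_nat)
    obtain ⟨n, hn⟩ := exists_nat_one_div_lt hs
    exact mem_iUnion.2 ⟨n, hn⟩
  have h1 := hrenew 1 one_pos
  rw [setLIntegral_congr_fun measurableSet_Icc (g := fun _ => 0) fun h hh =>
    measure_mono_null (Ioi_subset_Ioi (sub_nonneg.2 hh.2)) hν0, lintegral_zero] at h1
  exact zero_ne_one h1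

theorem measure_Icc_mul_measure_Ioi_le_one
    (hrenew : ∀ w : ℝ, 0 < w → ∫⁻ h in Icc 0 w, ν (Ioi (w - h)) ∂U = 1) {a δ : ℝ}
    (ha : 0 ≤ a) (hδ : 0 < δ) : U (Icc a (a + δ)) * ν (Ioi δ) ≤ 1 := calc
  U (Icc a (a + δ)) * ν (Ioi δ) = ∫⁻ _ in Icc a (a + δ), ν (Ioi δ) ∂U := by
      rw [setLIntegral_const, mul_comm]
  _ ≤ ∫⁻ h in Icc a (a + δ), ν (Ioi (a + δ - h)) ∂U :=
      setLIntegral_mono' measurableSet_Icc fun h hh =>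
        measure_mono (Ioi_subset_Ioi (by linarith [hh.1]))
  _ ≤ ∫⁻ h in Icc 0 (a + δ), ν (Ioi (a + δ - h)) ∂U :=
      lintegral_mono_set (Icc_subset_Icc_left ha)
  _ = 1 := hrenew _ (by linarith)

theorem exists_measure_Icc_le
    (hrenew : ∀ w : ℝ, 0 < w → ∫⁻ h in Icc 0 w, ν (Ioi (w - h)) ∂U = 1) :
    ∃ δ, 0 < δ ∧ ∃ C, C ≠ ⊤ ∧ ∀ a, 0 ≤ a → U (Icc a (a + δ)) ≤ C := by
  obtain ⟨t₀, ht₀, hνt₀⟩ := exists_measure_Ioi_ne_zero hrenew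
  exact ⟨t₀, ht₀, (ν (Ioi t₀))⁻¹, ENNReal.inv_ne_top.2 hνt₀, fun a ha =>
    ENNReal.le_inv_iff_mul_le.2 (measure_Icc_mul_measure_Ioi_le_one hrenew ha ht₀)⟩

theorem measurable_tailKernel : Measurable (Function.uncurry (tailKernel ν)) :=
  Measurable.ite (measurableSet_lt measurable_fst measurable_snd)
    ((measurable_measure_Ioi ν).comp (measurable_snd.sub measurable_fst)) measurable_const

theorem tailKernel_ne_top
    (hν1 : ∫⁻ s in Ioi (0 : ℝ), ENNReal.ofReal (min 1 s) ∂ν ≠ ⊤) (h s : ℝ) :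
    tailKernel ν h s ≠ ⊤ := by
  unfold tailKernel
  split_ifs with hhs
  · exact measure_Ioi_ne_top hν1 (sub_pos.2 hhs)
  · exact ENNReal.zero_ne_top

theorem setLIntegral_Ici_tailKernel (s : ℝ) :
    ∫⁻ h in Ici 0, tailKernel ν h s ∂U = ∫⁻ h in Ico 0 s, ν (Ioi (s - h)) ∂U := by
  rw [← lintegral_indicator measurableSet_Ici, ← lintegral_indicator measurableSet_Ico]
  refine lintegral_congr fun h => ?_
  by_cases h0 : 0 ≤ h <;> by_cases hs : h < s <;> simp [indicator, tailKernel, h0, hs]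

theorem setLIntegral_Ici_tailKernel_le_one
    (hrenew : ∀ w : ℝ, 0 < w → ∫⁻ h in Icc 0 w, ν (Ioi (w - h)) ∂U = 1) {s : ℝ} (hs : 0 < s) :
    ∫⁻ h in Ici 0, tailKernel ν h s ∂U ≤ 1 := by
  rw [setLIntegral_Ici_tailKernel, ← hrenew s hs]
  exact lintegral_mono_set Ico_subset_Icc_self

theorem setLIntegral_Ici_tailKernel_eq_one
    (hrenew : ∀ w : ℝ, 0 < w → ∫⁻ h in Icc 0 w, ν (Ioi (w - h)) ∂U = 1) {s : ℝ} (hs : 0 < s)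
    (hUs : U {s} = 0) : ∫⁻ h in Ici 0, tailKernel ν h s ∂U = 1 := by
  rw [setLIntegral_Ici_tailKernel, ← hrenew s hs, ← Ico_union_right hs.le,
    lintegral_union (measurableSet_singleton s) (by simp),
    Measure.restrict_eq_zero.2 hUs, lintegral_zero_measure, add_zero]

theorem ae_integral_tailKernel_smul_eq {E : Type*} [NormedAddCommGroup E] [NormedSpace ℝ E]
    [CompleteSpace E] [SFinite (U.restrict (Ici 0))]
    (hν1 : ∫⁻ s in Ioi (0 : ℝ), ENNReal.ofReal (min 1 s) ∂ν ≠ ⊤)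
    (hrenew : ∀ w : ℝ, 0 < w → ∫⁻ h in Icc 0 w, ν (Ioi (w - h)) ∂U = 1) :
    ∀ᵐ s ∂volume.restrict (Ioi 0), ∀ y : E, ∫ h in Ici 0, (tailKernel ν h s).toReal • y ∂U = y := by
  filter_upwards [ae_restrict_mem measurableSet_Ioi,
    ae_restrict_of_ae (ae_measure_singleton_eq_zero (U.restrict (Ici 0)))] with s hs hUs y
  rw [Measure.restrict_apply (measurableSet_singleton s),
    singleton_inter_of_mem (mem_Ici.2 hs.le)] at hUs
  exact integral_toReal_smul_const_of_lintegral_eq_one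
    (measurable_tailKernel.comp measurable_prodMk_right).aemeasurable
    (ae_of_all _ fun h => tailKernel_ne_top hν1 h s)
    (setLIntegral_Ici_tailKernel_eq_one hrenew hs hUs) y

theorem setIntegral_toReal_measure_Ioi_smul_comp_add {E : Type*} [NormedAddCommGroup E]
    [NormedSpace ℝ E] {h : ℝ} (hh : 0 ≤ h) (g : ℝ → E) :
    ∫ t in Ioi 0, (ν (Ioi t)).toReal • g (t + h) =
      ∫ s in Ioi 0, (tailKernel ν h s).toReal • g s := by
  calc ∫ t in Ioi 0, (ν (Ioi t)).toReal • g (t + h)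
      = ∫ t in Ioi 0, (tailKernel ν h (t + h)).toReal • g (t + h) :=
        setIntegral_congr_fun measurableSet_Ioi fun t (ht : 0 < t) => by
          simp [tailKernel, ht]
    _ = ∫ s in Ioi h, (tailKernel ν h s).toReal • g s :=
        setIntegral_Ioi_comp_add_right (fun s => (tailKernel ν h s).toReal • g s) h
    _ = ∫ s in Ioi 0, (tailKernel ν h s).toReal • g s := by
        refine (setIntegral_eq_of_subset_of_forall_sdiff_eq_zero measurableSet_Ioi
          (Ioi_subset_Ioi hh) fun s hs => ?_).symm
        have hsh : ¬h < s := hs.2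
        simp [tailKernel, hsh]

end Renewal

/-- Resolvent-convolution identity (equation (4.16)): for a strongly continuous contraction
semigroup `T` with generator `A`, `u ∈ D(A)`, `v = Au`, `λ > 0`, a Lévy measure `ν` with
tail `ν̄` and a measure `U` satisfying the renewal identity `∫_{[0,w]} ν̄(w-h) U(dh) = 1`,
one has `∫ e^{-λh} U(dh) < ∞` and
`∫_{[0,∞)} ∫₀^∞ e^{-λ(h+t)} T_{t+h}(v - λu) ν̄(t) dt U(dh) = -u`,
the iterated Bochner integral converging absolutely. -/
theorem resolvent_convolution_identity
    {X : Type*} [NormedAddCommGroup X] [NormedSpace ℝ X] [CompleteSpace X]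
    (T : ℝ → X →L[ℝ] X)
    (hT0 : T 0 = ContinuousLinearMap.id ℝ X)
    (hTsg : ∀ s t : ℝ, 0 ≤ s → 0 ≤ t → T (s + t) = (T s).comp (T t))
    (hTcon : ∀ t : ℝ, 0 ≤ t → ∀ f : X, ‖T t f‖ ≤ ‖f‖)
    (hTsc : ∀ f : X, Tendsto (fun t => T t f) (𝓝[≥] (0 : ℝ)) (𝓝 f))
    (u v : X)
    (hu : Tendsto (fun h : ℝ => h⁻¹ • (T h u - u)) (𝓝[>] (0 : ℝ)) (𝓝 v))
    (l : ℝ) (hl : 0 < l)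
    (ν : Measure ℝ)
    (hν1 : ∫⁻ s in Set.Ioi (0 : ℝ), ENNReal.ofReal (min 1 s) ∂ν ≠ ⊤)
    (U : Measure ℝ)
    (hrenew : ∀ w : ℝ, 0 < w → ∫⁻ h in Set.Icc 0 w, ν (Set.Ioi (w - h)) ∂U = 1) :
    (∫⁻ h in Set.Ici (0 : ℝ), ENNReal.ofReal (Real.exp (-(l * h))) ∂U ≠ ⊤) ∧
    (∀ h : ℝ, 0 ≤ h →
      IntegrableOn
        (fun t : ℝ =>
          (Real.exp (-(l * (h + t))) * (ν (Set.Ioi t)).toReal) • (T (t + h)) (v - l • u))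
        (Set.Ioi 0) volume) ∧
    IntegrableOn
      (fun h : ℝ => ∫ t in Set.Ioi (0 : ℝ),
        (Real.exp (-(l * (h + t))) * (ν (Set.Ioi t)).toReal) • (T (t + h)) (v - l • u))
      (Set.Ici 0) U ∧
    ∫ h in Set.Ici (0 : ℝ),
      (∫ t in Set.Ioi (0 : ℝ),
        (Real.exp (-(l * (h + t))) * (ν (Set.Ioi t)).toReal) • (T (t + h)) (v - l • u))
      ∂U = -u := by
  set x := v - l • u
  set g : ℝ → X := fun s => Real.exp (-(l * s)) • T s x with hg
  have hintegrand (h t : ℝ) : (Real.exp (-(l * (h + t))) * (ν (Ioi t)).toReal) • T (t + h) x =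
      (ν (Ioi t)).toReal • g (t + h) := by
    rw [hg, smul_smul, mul_comm, add_comm h t]
  simp_rw [hintegrand]
  obtain ⟨δ, hδ, C, hC, hU⟩ := exists_measure_Icc_le hrenew
  have := isLocallyFiniteMeasure_restrict_Ici hδ hC hU
  have hprod : Integrable (Function.uncurry fun h s => (tailKernel ν h s).toReal • g s)
      ((U.restrict (Ici 0)).prod (volume.restrict (Ioi 0))) :=
    integrable_toReal_smul_prod measurable_tailKernel
      (integrableOn_exp_smul_orbit hTsg hTcon hTsc x hl)
      ((ae_restrict_mem measurableSet_Ioi).mono fun s hs =>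
        setLIntegral_Ici_tailKernel_le_one hrenew hs)
  have hshift : ∀ᵐ h ∂U.restrict (Ici 0), ∫ t in Ioi 0, (ν (Ioi t)).toReal • g (t + h) =
      ∫ s in Ioi 0, (tailKernel ν h s).toReal • g s :=
    (ae_restrict_mem measurableSet_Ici).mono fun h hh =>
      setIntegral_toReal_measure_Ioi_smul_comp_add hh g
  refine ⟨lintegral_exp_neg_Ici_ne_top hδ hC hU hl, fun h hh =>
    integrableOn_toReal_measure_Ioi_smul_comp_add hν1 hl
      (continuousOn_exp_smul_orbit hTsg hTcon hTsc x l)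
      (fun s hs => norm_exp_smul_orbit_le hTcon x l hs) hh,
    hprod.integral_prod_left.congr (hshift.mono fun h hh => hh.symm), ?_⟩
  calc ∫ h in Ici 0, (∫ t in Ioi 0, (ν (Ioi t)).toReal • g (t + h)) ∂U
      = ∫ h in Ici 0, (∫ s in Ioi 0, (tailKernel ν h s).toReal • g s) ∂U :=
        integral_congr_ae hshift
    _ = ∫ s in Ioi 0, ∫ h in Ici 0, (tailKernel ν h s).toReal • g s ∂U :=
        integral_integral_swap hprod
    _ = ∫ s in Ioi 0, g s :=
        integral_congr_ae ((ae_integral_tailKernel_smul_eq hν1 hrenew).mono fun s hs => hs (g s))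
    _ = -u := integral_exp_smul_orbit_eq_neg hT0 hTsg hTcon hTsc hu hl
end

section
/- Positive maximum principle for the coupled space-time nonlocal operator (conservative case): let E be a locally compact separable metric space, let (p_s)_{s>0} be a family of probability kernels from E to E such that for every x ∈ E and every bounded continuous g : E → ℝ the map s ↦ ∫_E g(y) p_s(x,dy) is continuous on (0,∞), and let ν be a Borel measure on (0,∞) with ν([t,∞)) < ∞ and ν((t,∞)) > 0 for every t > 0. Let f : E × [0,∞) → ℝ be bounded and Borel measurable with f(·,0) continuous on E, and let (x⋆,t⋆) ∈ E × (0,∞) be such that f(x⋆,t⋆) ≥ f(x,t) for all (x,t) ∈ E × (0,t⋆] and f(x⋆,t⋆) > f(x,0) for all x ∈ E. If the function s ↦ ∫_E f(y,(t⋆−s)∨0) p_s(x⋆,dy) − f(x⋆,t⋆) is ν-integrable on (0,∞), then ∫₀^∞ (∫_E f(y,(t⋆−s)∨0) p_s(x⋆,dy) − f(x⋆,t⋆)) ν(ds) < 0. -/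
/-! For `s ∈ (0, t⋆]` the time argument `(t⋆ - s) ∨ 0` lies in `[0, t⋆]`, so the inner integral
is at most `f(x⋆, t⋆)` and the integrand is `≤ 0`. For `s > t⋆` the time argument is `0`, where
`f(·, 0) < f(x⋆, t⋆)` everywhere, so against a probability measure the integrand is `< 0`.
Since `ν((t⋆, ∞)) > 0`, the `ν`-integral is strictly negative. -/

open MeasureTheory Set Filter Topology ProbabilityTheory
open scoped BoundedContinuousFunction

namespace MeasureTheory

variable {α : Type*} [MeasurableSpace α]

theorem integral_le_of_forall_le {μ : Measure α} [IsProbabilityMeasure μ] {g : α → ℝ} {c : ℝ}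
    (hg : Integrable g μ) (h : ∀ x, g x ≤ c) : ∫ x, g x ∂μ ≤ c := by
  simpa using integral_mono hg (integrable_const c) h

theorem integral_lt_of_forall_lt {μ : Measure α} [IsProbabilityMeasure μ] {g : α → ℝ} {c : ℝ}
    (hg : Integrable g μ) (h : ∀ x, g x < c) : ∫ x, g x ∂μ < c := by
  have hgap : 0 < ∫ x, (c - g x) ∂μ := by
    rw [integral_pos_iff_support_of_nonneg (fun x => sub_nonneg.mpr (h x).le)
      ((integrable_const c).sub hg)]
    have hsupp : Function.support (fun x => c - g x) = univ :=
      eq_univ_of_forall fun x => sub_ne_zero.mpr (h x).ne'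
    simp [hsupp]
  rw [integral_sub (integrable_const c) hg] at hgap
  simpa using hgap

theorem setIntegral_neg_of_nonpos_of_neg_on {μ : Measure α} {F : α → ℝ} {s t : Set α}
    (hs : MeasurableSet s) (hF : IntegrableOn F s μ) (hle : ∀ x ∈ s, F x ≤ 0)
    (hts : t ⊆ s) (hlt : ∀ x ∈ t, F x < 0) (ht : 0 < μ t) : ∫ x in s, F x ∂μ < 0 := by
  have hneg : 0 < ∫ x in s, -F x ∂μ := by
    rw [setIntegral_pos_iff_support_of_nonneg_ae
      ((ae_restrict_iff' hs).mpr (ae_of_all _ fun x hx => neg_nonneg.mpr (hle x hx))) hF.neg]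
    exact ht.trans_le (measure_mono fun x hx => ⟨(neg_pos.mpr (hlt x hx)).ne', hts hx⟩)
  rw [integral_neg] at hneg
  linarith

end MeasureTheory

theorem positive_maximum_principle_coupled_general
    {E : Type*} [MeasurableSpace E]
    (p : ℝ → Kernel E E)
    (hmk : ∀ s : ℝ, 0 < s → IsMarkovKernel (p s))
    (ν : Measure ℝ)
    (hνpos : ∀ t : ℝ, 0 < t → 0 < ν (Set.Ioi t))
    (f : E × ℝ → ℝ) (hfm : Measurable f) (M : ℝ) (hfb : ∀ q : E × ℝ, |f q| ≤ M)
    (xstar : E) (tstar : ℝ) (htstar : 0 < tstar)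
    (hmax : ∀ (x : E) (t : ℝ), 0 < t → t ≤ tstar → f (x, t) ≤ f (xstar, tstar))
    (hstrict : ∀ x : E, f (x, 0) < f (xstar, tstar))
    (hint : IntegrableOn
      (fun s : ℝ => (∫ y, f (y, max (tstar - s) 0) ∂(p s xstar)) - f (xstar, tstar))
      (Set.Ioi 0) ν) :
    ∫ s in Set.Ioi (0 : ℝ),
      ((∫ y, f (y, max (tstar - s) 0) ∂(p s xstar)) - f (xstar, tstar)) ∂ν < 0 := by
  have hsection : ∀ s t : ℝ, 0 < s → Integrable (fun y => f (y, t)) (p s xstar) := fun s t hs =>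
    have := hmk s hs
    Integrable.of_bound (hfm.comp (measurable_id.prodMk measurable_const)).aestronglyMeasurable
      M (ae_of_all _ fun y => hfb (y, t))
  refine setIntegral_neg_of_nonpos_of_neg_on measurableSet_Ioi hint ?_
    (Ioi_subset_Ioi htstar.le) ?_ (hνpos tstar htstar)
  · intro s (hs : 0 < s)
    have := hmk s hs
    refine sub_nonpos.mpr (integral_le_of_forall_le (hsection s _ hs) fun y => ?_)
    rcases le_or_gt (tstar - s) 0 with hpast | hbefore
    · rw [max_eq_right hpast]; exact (hstrict y).le
    · rw [max_eq_left hbefore.le]; exact hmax y _ hbefore (by linarith)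
  · intro s (hs : tstar < s)
    have hs0 : 0 < s := htstar.trans hs
    have := hmk s hs0
    rw [max_eq_right (by linarith : tstar - s ≤ 0)]
    exact sub_neg.mpr (integral_lt_of_forall_lt (hsection s 0 hs0) hstrict)

/-- Positive maximum principle for the coupled space-time nonlocal operator (conservative
case): if `(p_s)_{s>0}` are probability kernels on a locally compact separable metric space
which are weakly continuous in `s`, `ν` has finite positive tails, `f` is bounded measurable
with continuous initial section, and `(xstar, tstar)` is a maximum point of `f` over
`E × (0,tstar]` which strictly dominates `f(·,0)`, then
`∫₀^∞ (∫ f(y,(tstar-s)∨0) p_s(xstar,dy) - f(xstar,tstar)) ν(ds) < 0`. -/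
theorem positive_maximum_principle_coupled
    {E : Type*} [MetricSpace E] [TopologicalSpace.SeparableSpace E] [LocallyCompactSpace E]
    [MeasurableSpace E] [BorelSpace E]
    (p : ℝ → Kernel E E)
    (hmk : ∀ s : ℝ, 0 < s → IsMarkovKernel (p s))
    (hcont : ∀ (x : E) (g : E →ᵇ ℝ),
      ContinuousOn (fun s : ℝ => ∫ y, g y ∂(p s x)) (Set.Ioi 0))
    (ν : Measure ℝ)
    (hνfin : ∀ t : ℝ, 0 < t → ν (Set.Ici t) < ⊤)
    (hνpos : ∀ t : ℝ, 0 < t → 0 < ν (Set.Ioi t))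
    (f : E × ℝ → ℝ) (hfm : Measurable f) (M : ℝ) (hfb : ∀ q : E × ℝ, |f q| ≤ M)
    (hf0 : Continuous fun x : E => f (x, 0))
    (xstar : E) (tstar : ℝ) (htstar : 0 < tstar)
    (hmax : ∀ (x : E) (t : ℝ), 0 < t → t ≤ tstar → f (x, t) ≤ f (xstar, tstar))
    (hstrict : ∀ x : E, f (x, 0) < f (xstar, tstar))
    (hint : IntegrableOn
      (fun s : ℝ => (∫ y, f (y, max (tstar - s) 0) ∂(p s xstar)) - f (xstar, tstar))
      (Set.Ioi 0) ν) :
    ∫ s in Set.Ioi (0 : ℝ),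
      ((∫ y, f (y, max (tstar - s) 0) ∂(p s xstar)) - f (xstar, tstar)) ∂ν < 0 :=
  positive_maximum_principle_coupled_general p hmk ν hνpos f hfm M hfb xstar tstar htstar hmax
    hstrict hint
end
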